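/- arXiv:1505.08114 — 14 statements merged into one kernel-verified Lean document; each statement's English description precedes it below -/
import Mathlib

section
/- Let d ≥ 1 and let G ⊆ ℝ^d be a domain. Then the topological hull T(G) is a domain, and moreover every connected component of ℝ^d \ T(G) is unbounded (so that T(G) is full, i.e. T(T(G)) = T(G)). -/
/-! A point lies in `T(G)` exactly when its component in the closed set `F = ℝ^d \ G` is
bounded (for points of `G` that component is empty). These points form an open set: if the
component of `x ∈ F` lies in a ball `B(x, R)`, then by Šura-Bura some clopen subset of the compact
set `F ∩ B̄(x, R)` contains `x` and lies in `B(x, R)`; it is relatively clopen in `F`, so it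
contains the (bounded) components of all its points. Each component of the complement of `T(G)`
therefore contains an unbounded component of `F`, which gives fullness. For connectedness, a
bounded component `C` of `F` must meet `closure G`: otherwise it is a component of the open set
`interior F`, hence clopen in `ℝ^d`, hence everything. So `G ∪ C` is connected. -/

/-- The topological hull `T(G)` of a set `G ⊆ ℝ^d`: the union of `G` with the
bounded connected components of the complement `ℝ^d \ G`. -/
def topHull {d : ℕ} (G : Set (EuclideanSpace ℝ (Fin d))) : Set (EuclideanSpace ℝ (Fin d)) :=
  G ∪ {x | x ∈ Gᶜ ∧ Bornology.IsBounded (connectedComponentIn Gᶜ x)}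


open Set Bornology Metric

section Topology

variable {X : Type*} [TopologicalSpace X]

theorem IsPreconnected.union_of_closure_inter_nonempty {s t : Set X} (hs : IsPreconnected s)
    (ht : IsPreconnected t) (hst : (closure s ∩ t).Nonempty) : IsPreconnected (s ∪ t) := by
  obtain ⟨y, hys, hyt⟩ := hst
  have hsy : IsPreconnected (insert y s) :=
    hs.subset_closure (subset_insert y s) (insert_subset hys subset_closure)
  simpa only [insert_union, insert_eq_of_mem (mem_union_right s hyt)] using
    hsy.union' ⟨y, mem_insert y s, hyt⟩ ht

theorem isClosed_connectedComponentIn {F : Set X} (hF : IsClosed F) (x : X) :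
    IsClosed (connectedComponentIn F x) := by
  by_cases hx : x ∈ F
  · rw [connectedComponentIn_eq_image hx]
    exact hF.isClosedEmbedding_subtypeVal.isClosed_iff_image_isClosed.1
      isClosed_connectedComponent
  · rw [connectedComponentIn_eq_empty hx]
    exact isClosed_empty

theorem connectedComponentIn_subset_inter_of_isClosed_inter {F O : Set X} (hO : IsOpen O)
    (hFO : IsClosed (F ∩ O)) {y : X} (hy : y ∈ O) : connectedComponentIn F y ⊆ F ∩ O := by
  by_cases hyF : y ∈ F
  · have hcover : connectedComponentIn F y ⊆ O ∪ (F ∩ O)ᶜ := fun z _ => by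
      by_cases hz : z ∈ O
      exacts [Or.inl hz, Or.inr fun h => hz h.2]
    have hdisj : connectedComponentIn F y ∩ (O ∩ (F ∩ O)ᶜ) = ∅ :=
      eq_empty_of_forall_notMem fun z ⟨hzF, hzO, hz⟩ =>
        hz ⟨connectedComponentIn_subset F y hzF, hzO⟩
    rcases isPreconnected_iff_subset_of_disjoint.1 isPreconnected_connectedComponentIn
      O (F ∩ O)ᶜ hO hFO.isOpen_compl hcover hdisj with h | h
    · exact subset_inter (connectedComponentIn_subset F y) h
    · exact absurd ⟨hyF, hy⟩ (h (mem_connectedComponentIn hyF))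
  · simp [connectedComponentIn_eq_empty hyF]

theorem exists_isClopen_mem_subset_of_connectedComponent_subset [T2Space X] [CompactSpace X]
    {x : X} {U : Set X} (hU : IsOpen U) (h : connectedComponent x ⊆ U) :
    ∃ Z, IsClopen Z ∧ x ∈ Z ∧ Z ⊆ U := by
  let N := {Z : Set X // IsClopen Z ∧ x ∈ Z}
  have : Nonempty N := ⟨⟨univ, isClopen_univ, mem_univ x⟩⟩
  have hdir : Directed (· ⊇ ·) fun Z : N => Z.val := by
    rintro ⟨s, hs, hxs⟩ ⟨t, ht, hxt⟩
    exact ⟨⟨s ∩ t, hs.inter ht, hxs, hxt⟩, inter_subset_left, inter_subset_right⟩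
  obtain ⟨⟨Z, hZ, hxZ⟩, hZU⟩ := exists_subset_nhds_of_compactSpace hdir (fun Z => Z.2.1.1)
    fun y hy => hU.mem_nhds (h (by rwa [connectedComponent_eq_iInter_isClopen]))
  exact ⟨Z, hZ, hxZ, hZU⟩

theorem IsClosed.connectedComponentIn_inter_closure_compl_nonempty [PreconnectedSpace X]
    [LocallyConnectedSpace X] {F : Set X} (hF : IsClosed F) {x : X} (hx : x ∈ F)
    (hne : connectedComponentIn F x ≠ univ) :
    (connectedComponentIn F x ∩ closure Fᶜ).Nonempty := by
  by_contra hempty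
  have hint : connectedComponentIn F x ⊆ interior F := by
    rw [interior_eq_compl_closure_compl]
    exact fun y hy hy' => hempty ⟨y, hy, hy'⟩
  have heq : connectedComponentIn (interior F) x = connectedComponentIn F x :=
    (connectedComponentIn_mono x interior_subset).antisymm
      (isPreconnected_connectedComponentIn.subset_connectedComponentIn
        (mem_connectedComponentIn hx) hint)
  have hopen : IsOpen (connectedComponentIn F x) := heq ▸ isOpen_interior.connectedComponentIn
  exact hne (IsClopen.eq_univ ⟨isClosed_connectedComponentIn hF x, hopen⟩
    ⟨x, mem_connectedComponentIn hx⟩)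

theorem not_isBounded_connectedComponentIn_setOf_not_isBounded [Bornology X] (F : Set X) {x : X}
    (hx : ¬IsBounded (connectedComponentIn F x)) :
    ¬IsBounded (connectedComponentIn {y | ¬IsBounded (connectedComponentIn F y)} x) := by
  have hxF : x ∈ F := connectedComponentIn_nonempty_iff.1 (nonempty_of_not_isBounded hx)
  refine fun hb => hx (hb.subset ?_)
  refine isPreconnected_connectedComponentIn.subset_connectedComponentIn
    (mem_connectedComponentIn hxF) fun y hy => ?_
  rwa [mem_ofPred_eq, ← connectedComponentIn_eq hy]

end Topology

section Metric

variable {E : Type*} [MetricSpace E] [ProperSpace E] {F : Set E}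

theorem IsClosed.exists_isOpen_isClosed_inter_of_connectedComponentIn_subset_ball
    (hF : IsClosed F) {x : E} (hxF : x ∈ F) {R : ℝ}
    (hR : connectedComponentIn F x ⊆ ball x R) :
    ∃ O, IsOpen O ∧ x ∈ O ∧ IsClosed (F ∩ O) ∧ O ⊆ ball x R := by
  have hxR : x ∈ ball x R := hR (mem_connectedComponentIn hxF)
  set K := F ∩ closedBall x R
  have hxK : x ∈ K := ⟨hxF, ball_subset_closedBall hxR⟩
  have : CompactSpace K := isCompact_iff_compactSpace.1 ((isCompact_closedBall x R).inter_left hF)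
  have hcomp : connectedComponent (⟨x, hxK⟩ : K) ⊆ (↑) ⁻¹' ball x R := by
    rw [← image_subset_iff]
    refine (IsPreconnected.subset_connectedComponentIn ?_
      (mem_image_of_mem _ mem_connectedComponent) ?_).trans hR
    · exact isPreconnected_connectedComponent.image _ continuous_subtype_val.continuousOn
    · rintro _ ⟨z, -, rfl⟩
      exact z.2.1
  obtain ⟨Z, hZ, hxZ, hZR⟩ := exists_isClopen_mem_subset_of_connectedComponent_subset
    (isOpen_ball.preimage continuous_subtype_val) hcomp
  obtain ⟨O, hO, rfl⟩ := isOpen_induced_iff.1 hZ.isOpen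
  refine ⟨O ∩ ball x R, hO.inter isOpen_ball, ⟨hxZ, hxR⟩, ?_, inter_subset_right⟩
  have himage : F ∩ (O ∩ ball x R) = (↑) '' ((↑) ⁻¹' O : Set K) := by
    ext y
    constructor
    · rintro ⟨hyF, hyO, hyR⟩
      exact ⟨⟨y, hyF, ball_subset_closedBall hyR⟩, hyO, rfl⟩
    · rintro ⟨z, hz, rfl⟩
      exact ⟨z.2.1, hz, hZR hz⟩
  rw [himage]
  exact (hZ.isClosed.isCompact.image continuous_subtype_val).isClosed

theorem IsClosed.isOpen_setOf_isBounded_connectedComponentIn (hF : IsClosed F) :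
    IsOpen {x | IsBounded (connectedComponentIn F x)} := by
  refine isOpen_iff_mem_nhds.2 fun x hx => ?_
  by_cases hxF : x ∈ F
  · obtain ⟨R, hR⟩ := hx.subset_ball x
    obtain ⟨O, hO, hxO, hFO, hOR⟩ :=
      hF.exists_isOpen_isClosed_inter_of_connectedComponentIn_subset_ball hxF hR
    filter_upwards [hO.mem_nhds hxO] with y hy
    exact isBounded_ball.subset
      ((connectedComponentIn_subset_inter_of_isClosed_inter hO hFO hy).trans
        (inter_subset_right.trans hOR))
  · filter_upwards [hF.isOpen_compl.mem_nhds hxF] with y hy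
    simp [connectedComponentIn_eq_empty hy]

end Metric

section TopHull

variable {d : ℕ}

theorem topHull_eq_setOf_isBounded (G : Set (EuclideanSpace ℝ (Fin d))) :
    topHull G = {x | IsBounded (connectedComponentIn Gᶜ x)} := by
  ext x
  by_cases hx : x ∈ G
  · simp [topHull, hx, connectedComponentIn_eq_empty (notMem_compl_iff.2 hx)]
  · simp [topHull, hx]

theorem isOpen_topHull {G : Set (EuclideanSpace ℝ (Fin d))} (hG : IsOpen G) :
    IsOpen (topHull G) := by
  rw [topHull_eq_setOf_isBounded]
  exact hG.isClosed_compl.isOpen_setOf_isBounded_connectedComponentIn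

theorem isConnected_topHull (hd : 1 ≤ d) {G : Set (EuclideanSpace ℝ (Fin d))}
    (hGopen : IsOpen G) (hGconn : IsConnected G) : IsConnected (topHull G) := by
  have : Nonempty (Fin d) := ⟨⟨0, hd⟩⟩
  obtain ⟨g, hg⟩ := hGconn.nonempty
  refine ⟨⟨g, subset_union_left hg⟩, isPreconnected_of_forall g fun y hy => ?_⟩
  by_cases hyG : y ∈ G
  · exact ⟨G, subset_union_left, hg, hyG, hGconn.isPreconnected⟩
  rw [topHull_eq_setOf_isBounded] at hy
  obtain ⟨z, hzC, hzG⟩ :=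
    hGopen.isClosed_compl.connectedComponentIn_inter_closure_compl_nonempty hyG
      fun h => NormedSpace.unbounded_univ ℝ _ (by rwa [← h])
  rw [compl_compl] at hzG
  refine ⟨G ∪ connectedComponentIn Gᶜ y, union_subset subset_union_left ?_, Or.inl hg,
    Or.inr (mem_connectedComponentIn hyG),
    hGconn.isPreconnected.union_of_closure_inter_nonempty isPreconnected_connectedComponentIn
      ⟨z, hzG, hzC⟩⟩
  rw [topHull_eq_setOf_isBounded]
  exact fun w hw => by rwa [mem_ofPred_eq, ← connectedComponentIn_eq hw]

theorem not_isBounded_connectedComponentIn_compl_topHull (G : Set (EuclideanSpace ℝ (Fin d)))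
    {x : EuclideanSpace ℝ (Fin d)} (hx : x ∈ (topHull G)ᶜ) :
    ¬IsBounded (connectedComponentIn (topHull G)ᶜ x) := by
  rw [topHull_eq_setOf_isBounded] at hx ⊢
  exact not_isBounded_connectedComponentIn_setOf_not_isBounded Gᶜ hx

theorem topHull_topHull (G : Set (EuclideanSpace ℝ (Fin d))) :
    topHull (topHull G) = topHull G :=
  union_eq_left.2 fun _ hx => (not_isBounded_connectedComponentIn_compl_topHull G hx.1 hx.2).elim

end TopHull

/-- If `G ⊆ ℝ^d` (`d ≥ 1`) is a domain (nonempty connected open set), then its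
topological hull `T(G)` is a domain; moreover every connected component of the
complement of `T(G)` is unbounded, so that `T(T(G)) = T(G)`, i.e. `T(G)` is full. -/
theorem hull_is_full_domain {d : ℕ} (hd : 1 ≤ d) (G : Set (EuclideanSpace ℝ (Fin d)))
    (hGopen : IsOpen G) (hGconn : IsConnected G) :
    IsOpen (topHull G) ∧ IsConnected (topHull G) ∧
      (∀ x ∈ (topHull G)ᶜ, ¬ Bornology.IsBounded (connectedComponentIn (topHull G)ᶜ x)) ∧
      topHull (topHull G) = topHull G :=
  ⟨isOpen_topHull hGopen, isConnected_topHull hd hGopen hGconn,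
    fun _ => not_isBounded_connectedComponentIn_compl_topHull G, topHull_topHull G⟩
end

section
/- Let d ≥ 2 and let U ⊆ ℝ^d be a bounded domain which is full (equivalently, every connected component of ℝ^d \ U is unbounded). Then the boundary ∂U is connected. -/
/-!
Every connected component of `Uᶜ` is unbounded, hence meets the connected complement of a large
ball, so `Uᶜ` is connected. Since `U` is open, `∂U = closure U ∩ Uᶜ`, and it remains to see that
Euclidean space is unicoherent: if it is the union of closed connected sets `A` and `B`, then
`A ∩ B` is connected. Given a separation of `A ∩ B`, take an Urysohn function `f` equal to `0` on
one part and `1` on the other. Then `f ≡ -f` modulo `2` on `A ∩ B`, so `f` on `A` and `-f` on `B`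
glue to a continuous map into `ℝ/2ℤ`, which lifts to a real function `g` because the space is
simply connected. Now `g - f` and `g + f` are continuous and `2ℤ`-valued on the connected sets
`A` and `B`, hence constant there, which is impossible as `f` takes both values `0` and `1` on
`A ∩ B`.
-/

open Set Metric Bornology

section Topology

variable {X : Type*} [TopologicalSpace X]

theorem IsPreconnected.sub_eq_of_coe_addCircle_eq {p : ℝ} {S : Set X} (hS : IsPreconnected S)
    {g φ : X → ℝ} (hg : ContinuousOn g S) (hφ : ContinuousOn φ S)
    (hgφ : ∀ x ∈ S, (g x : AddCircle p) = φ x) {x y : X} (hx : x ∈ S) (hy : y ∈ S) :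
    g x - φ x = g y - φ y := by
  refine hS.constant_of_mapsTo (T := AddSubgroup.zmultiples p)
    (isDiscrete_iff_discreteTopology.2
      (inferInstanceAs (DiscreteTopology (AddSubgroup.zmultiples p))))
    (hg.sub hφ) (fun z hz => ?_) hx hy
  rw [← neg_add_eq_sub]
  exact QuotientAddGroup.eq.1 (hgφ z hz).symm

theorem exists_lift_addCircle [SimplyConnectedSpace X] [LocallyPathConnectedSpace X] {p : ℝ}
    (h : C(X, AddCircle p)) : ∃ g : C(X, ℝ), ∀ x, (g x : AddCircle p) = h x := by
  obtain ⟨x₀⟩ : Nonempty X := inferInstance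
  obtain ⟨e₀, he₀⟩ := QuotientAddGroup.mk_surjective (h x₀)
  obtain ⟨g, ⟨-, hg⟩, -⟩ :=
    (AddCircle.isCoveringMap_coe p).existsUnique_continuousMap_lifts h x₀ e₀ he₀
  exact ⟨g, congrFun hg⟩

theorem IsPreconnected.inter_of_union_eq_univ [NormalSpace X] [SimplyConnectedSpace X]
    [LocallyPathConnectedSpace X] {A B : Set X} (hAc : IsClosed A) (hBc : IsClosed B)
    (hA : IsPreconnected A) (hB : IsPreconnected B) (hAB : A ∪ B = univ) :
    IsPreconnected (A ∩ B) := by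
  classical
  rw [isPreconnected_iff_subset_of_fully_disjoint_closed (hAc.inter hBc)]
  intro u v hu hv huv hdisj
  by_contra! ⟨hnu, hnv⟩
  obtain ⟨x₁, hx₁, hx₁u⟩ := not_subset.1 hnu
  obtain ⟨x₂, hx₂, hx₂v⟩ := not_subset.1 hnv
  obtain ⟨f, hf0, hf1, -⟩ := exists_continuous_zero_one_of_isClosed hu hv hdisj
  have hglue : ∀ x ∈ A ∩ B, (f x : AddCircle (2 : ℝ)) = ((-f x : ℝ) : AddCircle (2 : ℝ)) := by
    intro x hx
    rcases huv hx with hxu | hxv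
    · simp [hf0 hxu]
    · rw [hf1 hxv, QuotientAddGroup.eq]
      exact ⟨-1, by norm_num⟩
  have hfrontier : frontier A ⊆ A ∩ B := by
    refine subset_inter hAc.frontier_subset ?_
    rw [← frontier_compl]
    exact frontier_subset_closure.trans (closure_minimal (compl_subset_iff_union.2 hAB) hBc)
  obtain ⟨h, hhA, hhB⟩ : ∃ h : C(X, AddCircle (2 : ℝ)),
      (∀ x ∈ A, h x = f x) ∧ ∀ x ∈ B, h x = ((-f x : ℝ) : AddCircle (2 : ℝ)) := by
    refine ⟨⟨A.piecewise (fun x => f x) (fun x => ((-f x : ℝ) : AddCircle (2 : ℝ))),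
      Continuous.piecewise (fun x hx => hglue x (hfrontier hx)) (by fun_prop) (by fun_prop)⟩,
      fun x hx => by simp [hx], fun x hx => ?_⟩
    by_cases hxA : x ∈ A
    · simpa [hxA] using hglue x ⟨hxA, hx⟩
    · simp [hxA]
  obtain ⟨g, hg⟩ := exists_lift_addCircle h
  have hconstA := hA.sub_eq_of_coe_addCircle_eq g.continuous.continuousOn
    f.continuous.continuousOn (fun x hx => (hg x).trans (hhA x hx)) hx₁.1 hx₂.1
  have hconstB := hB.sub_eq_of_coe_addCircle_eq (φ := fun x => -f x) g.continuous.continuousOn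
    f.continuous.neg.continuousOn (fun x hx => (hg x).trans (hhB x hx)) hx₁.2 hx₂.2
  have hfx₁ : f x₁ = 1 := hf1 ((huv hx₁).resolve_left hx₁u)
  have hfx₂ : f x₂ = 0 := hf0 ((huv hx₂).resolve_right hx₂v)
  linarith

theorem isPreconnected_of_connectedComponentIn_inter_nonempty {s t : Set X}
    (ht : IsPreconnected t) (hts : t ⊆ s)
    (h : ∀ x ∈ s, (connectedComponentIn s x ∩ t).Nonempty) : IsPreconnected s := by
  have hsub : ∀ x ∈ s, t ⊆ connectedComponentIn s x := fun x hx =>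
    subset_union_right.trans <|
      (isPreconnected_connectedComponentIn.union' (h x hx) ht).subset_connectedComponentIn
        (Or.inl (mem_connectedComponentIn hx)) (union_subset (connectedComponentIn_subset _ _) hts)
  refine isPreconnected_of_forall_pair fun x hx y hy => ⟨connectedComponentIn s x,
    connectedComponentIn_subset _ _, mem_connectedComponentIn hx, ?_,
    isPreconnected_connectedComponentIn⟩
  obtain ⟨z, hzy, hzt⟩ := h y hy
  rw [connectedComponentIn_eq (hsub x hx hzt), ← connectedComponentIn_eq hzy]
  exact mem_connectedComponentIn hy

end Topology

section NormedSpace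

variable {E : Type*} [NormedAddCommGroup E] [NormedSpace ℝ E]

theorem isPreconnected_compl_closedBall (h : 1 < Module.rank ℝ E) (r : ℝ) :
    IsPreconnected (closedBall (0 : E) r)ᶜ := by
  rcases lt_or_ge r 0 with hr | hr
  · rw [closedBall_eq_empty.2 hr, compl_empty]
    exact isPreconnected_univ
  have himage :
      (fun p : E × ℝ => p.2 • p.1) '' (sphere 0 1 ×ˢ Ioi r) = (closedBall (0 : E) r)ᶜ := by
    ext x
    simp only [mem_image, mem_prod, mem_sphere_zero_iff_norm, mem_Ioi, Prod.exists,
      mem_compl_iff, mem_closedBall_zero_iff, not_le]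
    constructor
    · rintro ⟨u, t, ⟨hu, ht⟩, rfl⟩
      rw [norm_smul, hu, mul_one, Real.norm_eq_abs]
      exact ht.trans_le (le_abs_self t)
    · intro hx
      have hx0 : x ≠ 0 := norm_pos_iff.1 (hr.trans_lt hx)
      exact ⟨(‖x‖⁻¹ : ℝ) • x, ‖x‖, ⟨norm_smul_inv_norm hx0, hx⟩,
        smul_inv_smul₀ (norm_ne_zero_iff.2 hx0) x⟩
  rw [← himage]
  exact ((isConnected_sphere h 0 zero_le_one).isPreconnected.prod isPreconnected_Ioi).image _
    (by fun_prop)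

theorem isPreconnected_compl_of_forall_not_isBounded_connectedComponentIn
    (h : 1 < Module.rank ℝ E) {U : Set E} (hU : IsBounded U)
    (hfull : ∀ x ∈ Uᶜ, ¬ IsBounded (connectedComponentIn Uᶜ x)) : IsPreconnected Uᶜ := by
  obtain ⟨r, hr⟩ := hU.subset_closedBall 0
  refine isPreconnected_of_connectedComponentIn_inter_nonempty
    (isPreconnected_compl_closedBall h r) (compl_subset_compl.2 hr) fun x hx => ?_
  exact not_subset.1 fun hsub => hfull x hx (isBounded_closedBall.subset hsub)

end NormedSpace

/-- If `U ⊆ ℝ^d` (`d ≥ 2`) is a bounded domain (nonempty connected open set) which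
is full, i.e. every connected component of `ℝ^d \ U` is unbounded, then the
boundary `∂U` is connected. -/
theorem frontier_connected_of_full {d : ℕ} (hd : 2 ≤ d) (U : Set (EuclideanSpace ℝ (Fin d)))
    (hUopen : IsOpen U) (hUconn : IsConnected U) (hUbdd : Bornology.IsBounded U)
    (hfull : ∀ x ∈ Uᶜ, ¬ Bornology.IsBounded (connectedComponentIn Uᶜ x)) :
    IsConnected (frontier U) := by
  have hrank : 1 < Module.rank ℝ (EuclideanSpace ℝ (Fin d)) := by
    rw [← Module.finrank_eq_rank, finrank_euclideanSpace_fin]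
    exact_mod_cast hd
  have : Nontrivial (EuclideanSpace ℝ (Fin d)) :=
    rank_pos_iff_nontrivial.1 (zero_lt_one.trans hrank)
  refine ⟨nonempty_frontier_iff.2 ⟨hUconn.nonempty, ?_⟩, ?_⟩
  · rintro rfl
    exact NormedSpace.unbounded_univ ℝ _ hUbdd
  rw [hUopen.frontier_eq, sdiff_eq]
  exact IsPreconnected.inter_of_union_eq_univ isClosed_closure hUopen.isClosed_compl
    hUconn.isPreconnected.closure
    (isPreconnected_compl_of_forall_not_isBounded_connectedComponentIn hrank hUbdd hfull)
    (univ_subset_iff.1 (union_compl_self U ▸ union_subset_union_left _ subset_closure))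
end

section
/- Let d ≥ 2 and let U ⊆ ℝ^d be a bounded domain whose boundary ∂U is connected. Then U is full; equivalently, if a bounded domain U ⊆ ℝ^d is hollow, then ∂U is disconnected. -/
/-!
In a connected, locally connected space every connected component of a closed proper subset `F`
reaches the frontier of `F`: the component is closed, and its frontier points cannot be interior
points of `F`, since a connected neighbourhood inside `F` would be absorbed by the component.
Hence a preconnected frontier lies in one component and forces `F` to be preconnected.
Applied to `F = Uᶜ`, whose frontier is `∂U`, the complement of `U` is its own unique component,
and it is unbounded because `U` is bounded.
-/

open Set

section ConnectedComponentIn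

variable {X : Type*} [TopologicalSpace X] {F : Set X}

protected theorem IsClosed.connectedComponentIn (hF : IsClosed F) (x : X) :
    IsClosed (connectedComponentIn F x) := by
  by_cases hx : x ∈ F
  · refine isClosed_of_closure_subset ?_
    exact isPreconnected_connectedComponentIn.closure.subset_connectedComponentIn
      (subset_closure (mem_connectedComponentIn hx))
      (hF.closure_subset_iff.mpr (connectedComponentIn_subset F x))
  · rw [connectedComponentIn_eq_empty hx]
    exact isClosed_empty

theorem frontier_connectedComponentIn_subset [LocallyConnectedSpace X] (hF : IsClosed F)
    (x : X) : frontier (connectedComponentIn F x) ⊆ frontier F := by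
  intro z hz
  have hzC : z ∈ connectedComponentIn F x := (hF.connectedComponentIn x).frontier_subset hz
  refine ⟨subset_closure (connectedComponentIn_subset F x hzC), fun hzint => hz.2 ?_⟩
  have hsub : connectedComponentIn (interior F) z ⊆ connectedComponentIn F x := by
    rw [connectedComponentIn_eq hzC]
    exact isPreconnected_connectedComponentIn.subset_connectedComponentIn
      (mem_connectedComponentIn hzint)
      ((connectedComponentIn_subset _ _).trans interior_subset)
  exact mem_interior_iff_mem_nhds.mpr <|
    Filter.mem_of_superset (connectedComponentIn_mem_nhds (isOpen_interior.mem_nhds hzint)) hsub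

theorem exists_mem_frontier_mem_connectedComponentIn [PreconnectedSpace X]
    [LocallyConnectedSpace X] (hF : IsClosed F) (hFne : F ≠ univ) {x : X} (hx : x ∈ F) :
    ∃ z ∈ frontier F, z ∈ connectedComponentIn F x := by
  have hCne : connectedComponentIn F x ≠ univ :=
    fun h => hFne (eq_univ_of_univ_subset (h ▸ connectedComponentIn_subset F x))
  obtain ⟨z, hz⟩ :=
    nonempty_frontier_iff.mpr ⟨⟨x, mem_connectedComponentIn hx⟩, hCne⟩
  exact ⟨z, frontier_connectedComponentIn_subset hF x hz,
    (hF.connectedComponentIn x).frontier_subset hz⟩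

theorem IsClosed.isPreconnected_of_isPreconnected_frontier [PreconnectedSpace X]
    [LocallyConnectedSpace X] (hF : IsClosed F) (hfr : IsPreconnected (frontier F)) :
    IsPreconnected F := by
  by_cases hFne : F = univ
  · exact hFne ▸ isPreconnected_univ
  refine isPreconnected_of_forall_pair fun x hx y hy => ?_
  obtain ⟨zx, hzx, hzxC⟩ := exists_mem_frontier_mem_connectedComponentIn hF hFne hx
  obtain ⟨zy, hzy, hzyC⟩ := exists_mem_frontier_mem_connectedComponentIn hF hFne hy
  have hfrC : frontier F ⊆ connectedComponentIn F zx :=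
    hfr.subset_connectedComponentIn hzx hF.frontier_subset
  have hcomp : connectedComponentIn F y = connectedComponentIn F x := by
    rw [connectedComponentIn_eq hzyC, connectedComponentIn_eq hzxC,
      connectedComponentIn_eq (hfrC hzy)]
  exact ⟨connectedComponentIn F x, connectedComponentIn_subset F x, mem_connectedComponentIn hx,
    hcomp ▸ mem_connectedComponentIn hy, isPreconnected_connectedComponentIn⟩

end ConnectedComponentIn

theorem full_of_frontier_connected_general {d : ℕ} (U : Set (EuclideanSpace ℝ (Fin d)))
    (hUopen : IsOpen U) (hUconn : IsConnected U) (hUbdd : Bornology.IsBounded U)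
    (hfr : IsConnected (frontier U)) :
    topHull U = U := by
  have hcompl : IsPreconnected Uᶜ :=
    hUopen.isClosed_compl.isPreconnected_of_isPreconnected_frontier
      (by rw [frontier_compl]; exact hfr.isPreconnected)
  refine union_eq_self_of_subset_right ?_
  rintro x ⟨hx, hbdd⟩
  rw [hcompl.connectedComponentIn hx] at hbdd
  obtain ⟨u, hu⟩ := hUconn.nonempty
  have : Nontrivial (EuclideanSpace ℝ (Fin d)) :=
    nontrivial_of_ne u x (ne_of_mem_of_not_mem hu hx)
  exact (NormedSpace.unbounded_univ ℝ _ (by simpa using hUbdd.union hbdd)).elim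

/-- If `U ⊆ ℝ^d` (`d ≥ 2`) is a bounded domain (nonempty connected open set) whose
boundary `∂U` is connected, then `U` is full, i.e. `T(U) = U`. Equivalently, a
bounded hollow domain has disconnected boundary. -/
theorem full_of_frontier_connected {d : ℕ} (hd : 2 ≤ d) (U : Set (EuclideanSpace ℝ (Fin d)))
    (hUopen : IsOpen U) (hUconn : IsConnected U) (hUbdd : Bornology.IsBounded U)
    (hfr : IsConnected (frontier U)) :
    topHull U = U :=
  full_of_frontier_connected_general U hUopen hUconn hUbdd hfr
end

section
/- Let d ≥ 2, let f : ℝ^d → ℝ^d be a continuous open map, and let U ⊆ ℝ^d be a bounded full domain such that f(∂U) ∩ f(U) = ∅. Then f(∂U) = ∂(f(U)), and f(U) is a bounded full domain. -/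
/-!
As `f` is open and `closure U` is compact, `f(U)` is open and `closure f(U) = f(closure U)`;
with `f(∂U) ∩ f(U) = ∅` this gives `∂ f(U) = f(∂U)`. It remains to see that `ℝ^d \ f(U)` is
connected. Because `U` is full and `d ≥ 2`, every component of `ℝ^d \ U` is unbounded, hence
meets the connected exterior of a large ball, so `ℝ^d \ U` is connected. Being simply connected,
`ℝ^d` is unicoherent: if it is the union of two closed connected sets, their intersection is
connected (otherwise an Urysohn function yields a circle-valued map of winding number one, which
has no real lift). Applied to `closure U` and `ℝ^d \ U`, this makes `∂U` connected, hence also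
`∂ f(U) = f(∂U)`; as every component of `ℝ^d \ f(U)` meets `∂ f(U)`, the complement is connected.
-/

open Set Metric Bornology

section Topology

variable {X : Type*} [TopologicalSpace X]

lemma IsPreconnected.eq_of_circleExp_eq_one {S : Set X} (hS : IsPreconnected S) {h : X → ℝ}
    (hh : ContinuousOn h S) (h1 : ∀ x ∈ S, Circle.exp (h x) = 1) {x y : X} (hx : x ∈ S)
    (hy : y ∈ S) : h x = h y :=
  hS.constant_of_mapsTo (T := AddSubgroup.zmultiples (2 * Real.pi))
    ⟨inferInstanceAs (DiscreteTopology (AddSubgroup.zmultiples _))⟩ hh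
    (fun z hz => by
      obtain ⟨n, hn⟩ := Circle.exp_eq_one.1 (h1 z hz)
      exact ⟨n, by simp [hn]⟩) hx hy

theorem isPreconnected_inter_of_union_eq_univ [NormalSpace X] [SimplyConnectedSpace X]
    [LocallyPathConnectedSpace X] {A B : Set X} (hA : IsClosed A) (hB : IsClosed B)
    (hAc : IsPreconnected A) (hBc : IsPreconnected B) (hAB : A ∪ B = univ) :
    IsPreconnected (A ∩ B) := by
  classical
  rw [isPreconnected_closed_iff]
  rintro P Q hP hQ hcover ⟨p, hpAB, hpP⟩ ⟨q, hqAB, hqQ⟩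
  by_contra hPQ
  obtain ⟨α, hαQ, hαP, -⟩ := exists_continuous_zero_one_of_isClosed
    ((hA.inter hB).inter hQ) ((hA.inter hB).inter hP)
    (disjoint_left.2 fun x ⟨hxAB, hxQ⟩ ⟨_, hxP⟩ => hPQ ⟨x, hxAB, hxP, hxQ⟩)
  have hagree : ∀ x ∈ A ∩ B,
      Circle.exp (Real.pi * α x) = Circle.exp (-(Real.pi * α x)) := fun x hx => by
    rcases hcover hx with hxP | hxQ
    · rw [hαP ⟨hx, hxP⟩]
      exact Circle.exp_eq_exp.2 ⟨1, by simp; ring⟩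
    · simp [hαQ ⟨hx, hxQ⟩]
  -- A lift `θ` of `g` is `π α` up to a constant on `A` and `-π α` up to a constant on `B`;
  -- comparing the values at `p` (where `α = 1`) and `q` (where `α = 0`) gives `π = -π`.
  let g : X → Circle := A.piecewise (fun x => Circle.exp (Real.pi * α x))
    (fun x => Circle.exp (-(Real.pi * α x)))
  have hgB : ∀ x ∈ B, g x = Circle.exp (-(Real.pi * α x)) := fun x hxB => by
    by_cases hxA : x ∈ A
    · simp only [g, piecewise_eq_of_mem _ _ _ hxA, hagree x ⟨hxA, hxB⟩]
    · simp only [g, piecewise_eq_of_notMem _ _ _ hxA]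
  have hfrontier : frontier A ⊆ A ∩ B := by
    refine fun x hx => ⟨hA.frontier_subset hx, ?_⟩
    rw [← frontier_compl] at hx
    exact closure_minimal (compl_subset_iff_union.2 hAB) hB (frontier_subset_closure hx)
  have hg : Continuous g :=
    Continuous.piecewise (fun x hx => hagree x (hfrontier hx)) (by fun_prop) (by fun_prop)
  obtain ⟨θ, -, hθ⟩ := (Circle.isCoveringMap_exp.existsUnique_continuousMap_lifts ⟨g, hg⟩ p
    (Real.pi * α p) (by simp [g, hpAB.1])).exists
  have hθg : ∀ x, Circle.exp (θ x) = g x := fun x => congrFun hθ x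
  have hA_const := hAc.eq_of_circleExp_eq_one (h := fun x => θ x - Real.pi * α x)
    (by fun_prop) (fun x hx => by simp [Circle.exp_sub, hθg, g, hx]) hpAB.1 hqAB.1
  have hB_const := hBc.eq_of_circleExp_eq_one (h := fun x => θ x + Real.pi * α x)
    (by fun_prop) (fun x hx => by simp [Circle.exp_add, hθg, hgB x hx, Circle.exp_neg])
    hpAB.2 hqAB.2
  simp only [hαP ⟨hpAB, hpP⟩, hαQ ⟨hqAB, hqQ⟩] at hA_const hB_const
  norm_num at hA_const hB_const
  linarith [Real.pi_pos]

theorem isPreconnected_of_connectedComponentIn_inter_nonempty_s3 {F T : Set X}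
    (hT : IsPreconnected T) (hTF : T ⊆ F) (h : ∀ x ∈ F, (connectedComponentIn F x ∩ T).Nonempty) :
    IsPreconnected F := by
  have hT_sub : ∀ x ∈ F, T ⊆ connectedComponentIn F x := fun x hx => by
    obtain ⟨t, htx, htT⟩ := h x hx
    rw [connectedComponentIn_eq htx]
    exact hT.subset_connectedComponentIn htT hTF
  refine isPreconnected_of_forall_pair fun x hx y hy => ?_
  obtain ⟨t, -, htT⟩ := h x hx
  exact ⟨_, union_subset (connectedComponentIn_subset F x) (connectedComponentIn_subset F y),
    .inl (mem_connectedComponentIn hx), .inr (mem_connectedComponentIn hy),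
    isPreconnected_connectedComponentIn.union t (hT_sub x hx htT) (hT_sub y hy htT)
      isPreconnected_connectedComponentIn⟩

theorem IsClosed.connectedComponentIn_inter_frontier_nonempty [PreconnectedSpace X]
    [LocallyConnectedSpace X] {F : Set X} (hF : IsClosed F) (hFne : F ≠ univ) {x : X}
    (hx : x ∈ F) : (connectedComponentIn F x ∩ frontier F).Nonempty := by
  set C := connectedComponentIn F x
  by_contra hCfr
  have hC_int : C ⊆ interior F := fun z hz => by
    by_contra hzint
    exact hCfr ⟨z, hz, hF.frontier_eq ▸ ⟨connectedComponentIn_subset F x hz, hzint⟩⟩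
  -- a component of `F` inside `interior F` is also a component of the open set `interior F`
  have hC_open : IsOpen C := by
    rw [show C = connectedComponentIn (interior F) x from
      (isPreconnected_connectedComponentIn.subset_connectedComponentIn
        (mem_connectedComponentIn hx) hC_int).antisymm
        (connectedComponentIn_mono x interior_subset)]
    exact isOpen_interior.connectedComponentIn
  have hC_closed : IsClosed C := isClosed_of_closure_subset <|
    isPreconnected_connectedComponentIn.closure.subset_connectedComponentIn
      (subset_closure (mem_connectedComponentIn hx)) (hF.closure_subset_iff.2
        (connectedComponentIn_subset F x))
  rcases isClopen_iff.1 ⟨hC_closed, hC_open⟩ with hC | hC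
  · exact (hC ▸ mem_connectedComponentIn hx : x ∈ (∅ : Set X))
  · exact hFne (univ_subset_iff.1 (hC ▸ connectedComponentIn_subset F x))

end Topology

theorem isPreconnected_compl_closedBall_s3 {E : Type*} [NormedAddCommGroup E] [NormedSpace ℝ E]
    (h : 1 < Module.rank ℝ E) {R : ℝ} (hR : 0 ≤ R) : IsPreconnected (closedBall (0 : E) R)ᶜ := by
  have himage : (fun p : E × ℝ => p.2 • p.1) '' (sphere 0 1 ×ˢ Ioi R) = (closedBall 0 R)ᶜ := by
    ext x
    simp only [mem_image, mem_prod, mem_sphere_zero_iff_norm, mem_Ioi, Prod.exists, mem_compl_iff,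
      mem_closedBall_zero_iff, not_le]
    constructor
    · rintro ⟨u, t, ⟨hu, ht⟩, rfl⟩
      rwa [norm_smul, hu, mul_one, Real.norm_of_nonneg (hR.trans ht.le)]
    · intro hx
      have hx0 : ‖x‖ ≠ 0 := (hR.trans_lt hx).ne'
      exact ⟨‖x‖⁻¹ • x, ‖x‖, ⟨by simp [norm_smul, hx0], hx⟩, by simp [smul_smul, hx0]⟩
  rw [← himage]
  exact ((isPreconnected_sphere h 0 1).prod isPreconnected_Ioi).image _ (by fun_prop)

theorem frontier_image_eq_image_frontier {X Y : Type*} [TopologicalSpace X] [TopologicalSpace Y]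
    [T2Space Y] {f : X → Y} (hf : Continuous f) {U : Set X} (hU : IsCompact (closure U))
    (hfU : IsOpen (f '' U)) (hdisj : Disjoint (f '' frontier U) (f '' U)) :
    frontier (f '' U) = f '' frontier U := by
  have hclosure : closure (f '' U) = f '' closure U :=
    (closure_minimal (image_mono subset_closure) (hU.image hf).isClosed).antisymm
      (image_closure_subset_closure_image hf)
  rw [hfU.frontier_eq, hclosure, closure_eq_self_union_frontier, image_union, union_sdiff_left,
    hdisj.sdiff_eq_left]

section Hull

variable {d : ℕ}

theorem isPreconnected_compl_of_topHull_eq_self (hd : 2 ≤ d) {U : Set (EuclideanSpace ℝ (Fin d))}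
    (hU : IsBounded U) (hfull : topHull U = U) : IsPreconnected Uᶜ := by
  obtain ⟨R, hR, hUR⟩ := hU.subset_closedBall_lt 0 0
  have hrank : 1 < Module.rank ℝ (EuclideanSpace ℝ (Fin d)) := by
    rw [← Module.finrank_eq_rank, finrank_euclideanSpace_fin]
    exact_mod_cast hd
  refine isPreconnected_of_connectedComponentIn_inter_nonempty_s3
    (isPreconnected_compl_closedBall_s3 hrank hR.le) (compl_subset_compl.2 hUR) fun x hx => ?_
  by_contra hdisj
  have hbdd : IsBounded (connectedComponentIn Uᶜ x) :=
    (isBounded_closedBall (x := 0) (r := R)).subset fun z hz =>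
      by_contra fun hzR => hdisj ⟨z, hz, hzR⟩
  have hx_hull : x ∈ topHull U := Or.inr ⟨hx, hbdd⟩
  exact hx (hfull ▸ hx_hull)

theorem topHull_eq_self_of_isPreconnected_compl (hd : 0 < d) {G : Set (EuclideanSpace ℝ (Fin d))}
    (hG : IsBounded G) (hGc : IsPreconnected Gᶜ) : topHull G = G := by
  have : Nontrivial (EuclideanSpace ℝ (Fin d)) := by
    have : Nonempty (Fin d) := ⟨⟨0, hd⟩⟩
    infer_instance
  refine union_eq_left.2 fun x ⟨hx, hbdd⟩ => ?_
  rw [hGc.connectedComponentIn hx] at hbdd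
  exact absurd (union_compl_self G ▸ hG.union hbdd) (NormedSpace.unbounded_univ ℝ _)

end Hull

/-- Let `d ≥ 2`, let `f : ℝ^d → ℝ^d` be a continuous open map, and let `U` be a
bounded full domain with `f(∂U) ∩ f(U) = ∅`. Then `f(∂U) = ∂(f(U))` and `f(U)` is
a bounded full domain. -/
theorem image_of_bounded_full_domain {d : ℕ} (hd : 2 ≤ d)
    (f : EuclideanSpace ℝ (Fin d) → EuclideanSpace ℝ (Fin d))
    (hfc : Continuous f) (hfo : IsOpenMap f)
    (U : Set (EuclideanSpace ℝ (Fin d)))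
    (hUopen : IsOpen U) (hUconn : IsConnected U) (hUbdd : Bornology.IsBounded U)
    (hUfull : topHull U = U)
    (hdisj : f '' (frontier U) ∩ f '' U = ∅) :
    f '' (frontier U) = frontier (f '' U) ∧
      Bornology.IsBounded (f '' U) ∧ IsOpen (f '' U) ∧ IsConnected (f '' U) ∧
      topHull (f '' U) = f '' U := by
  have hGopen : IsOpen (f '' U) := hfo U hUopen
  have hGconn : IsConnected (f '' U) := hUconn.image f hfc.continuousOn
  have hGbdd : IsBounded (f '' U) :=
    (hUbdd.isCompact_closure.image hfc).isBounded.subset (image_mono subset_closure)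
  have hfrontier : frontier (f '' U) = f '' frontier U :=
    frontier_image_eq_image_frontier hfc hUbdd.isCompact_closure hGopen
      (disjoint_iff_inter_eq_empty.2 hdisj)
  have hUfrontier : IsPreconnected (frontier U) := by
    rw [hUopen.frontier_eq, sdiff_eq]
    exact isPreconnected_inter_of_union_eq_univ isClosed_closure hUopen.isClosed_compl
      hUconn.isPreconnected.closure (isPreconnected_compl_of_topHull_eq_self hd hUbdd hUfull)
      (eq_univ_of_subset (union_subset_union_left _ subset_closure) (union_compl_self U))
  have hGc : IsPreconnected (f '' U)ᶜ := by
    refine isPreconnected_of_connectedComponentIn_inter_nonempty_s3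
      (hfrontier ▸ hUfrontier.image f hfc.continuousOn) ?_ fun x hx => ?_
    · rw [hGopen.frontier_eq]
      exact sdiff_subset_compl _ _
    · simpa only [frontier_compl] using
        hGopen.isClosed_compl.connectedComponentIn_inter_frontier_nonempty
          (compl_ne_univ.2 hGconn.nonempty) hx
  exact ⟨hfrontier.symm, hGbdd, hGopen, hGconn,
    topHull_eq_self_of_isPreconnected_compl (by omega) hGbdd hGc⟩
end

section
/- Let d ≥ 1, let U ⊆ ℝ^d be open, and let E be a bounded connected component of ℝ^d \ U. Then there exists n ∈ ℕ such that the connected component of the set {y ∈ ℝ^d : dist(y, ℝ^d \ U) ≤ 1/n} that contains E is bounded. Here dist(y, S) = inf_{s ∈ S} |y − s| denotes Euclidean distance. -/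
open Metric Set Bornology Topology

/-!
Put `F = Uᶜ` and choose `R` with `E ⊆ ball x₀ R`. In the compact set `K = F ∩ closedBall x₀ R` the
component `E` is the intersection of the clopen subsets of `K` containing it, so by compactness one
of them, `C`, already lies in `ball x₀ R`. Then `C` is compact and `F \ C` is closed, hence the
two have disjoint closed `δ`-thickenings. For `1 / n ≤ δ` the set `{y | infDist y F ≤ 1 / n}` is
the union of these two disjoint closed thickenings, so its component through a point of `E` stays
in the bounded thickening of `C`.
-/

theorem exists_isClopen_connectedComponent_subset {X : Type*} [TopologicalSpace X] [T2Space X]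
    [CompactSpace X] {x : X} {U : Set X} (hU : IsOpen U) (hxU : connectedComponent x ⊆ U) :
    ∃ V, IsClopen V ∧ connectedComponent x ⊆ V ∧ V ⊆ U := by
  have : Nonempty { s : Set X // IsClopen s ∧ x ∈ s } := ⟨⟨univ, isClopen_univ, mem_univ x⟩⟩
  have hdir : Directed (· ⊇ ·) fun s : { s : Set X // IsClopen s ∧ x ∈ s } => s.val := by
    rintro ⟨s, hs, hxs⟩ ⟨t, ht, hxt⟩
    exact ⟨⟨s ∩ t, hs.inter ht, hxs, hxt⟩, inter_subset_left, inter_subset_right⟩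
  obtain ⟨⟨V, hV, hxV⟩, hVU⟩ := exists_subset_nhds_of_compactSpace hdir (fun s => s.2.1.isClosed)
    fun y hy => hU.mem_nhds (hxU (connectedComponent_eq_iInter_isClopen x ▸ hy))
  exact ⟨V, hV, hV.connectedComponent_subset hxV, hVU⟩

theorem IsCompact.exists_isCompact_connectedComponentIn_subset {X : Type*} [TopologicalSpace X]
    [T2Space X] {K U : Set X} (hK : IsCompact K) (hU : IsOpen U) {x : X} (hx : x ∈ K)
    (hxU : connectedComponentIn K x ⊆ U) :
    ∃ C, IsCompact C ∧ IsClosed (K \ C) ∧ connectedComponentIn K x ⊆ C ∧ C ⊆ K ∩ U := by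
  have : CompactSpace K := isCompact_iff_compactSpace.mp hK
  rw [connectedComponentIn_eq_image hx] at hxU ⊢
  obtain ⟨V, hV, hxV, hVU⟩ := exists_isClopen_connectedComponent_subset
    (hU.preimage continuous_subtype_val) (image_subset_iff.mp hxU)
  refine ⟨(↑) '' V, hV.isClosed.isCompact.image continuous_subtype_val, ?_, image_mono hxV, ?_⟩
  · have : K \ (↑) '' V = (↑) '' Vᶜ := by
      rw [image_compl_eq_range_sdiff_image Subtype.val_injective, Subtype.range_coe]
    rw [this]
    exact (hV.compl.isClosed.isCompact.image continuous_subtype_val).isClosed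
  · rintro _ ⟨y, hy, rfl⟩
    exact ⟨y.2, hVU hy⟩

theorem connectedComponentIn_union_subset_left {X : Type*} [TopologicalSpace X] {A B : Set X}
    (hA : IsClosed A) (hB : IsClosed B) (hAB : Disjoint A B) {x : X} (hx : x ∈ A) :
    connectedComponentIn (A ∪ B) x ⊆ A := by
  refine (isPreconnected_iff_subset_of_disjoint_closed.mp isPreconnected_connectedComponentIn
    A B hA hB (connectedComponentIn_subset _ _) (by simp [hAB.inter_eq])).resolve_right
    fun hsub => hAB.notMem_of_mem_left hx (hsub (mem_connectedComponentIn (Or.inl hx)))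

theorem IsClosed.exists_isCompact_connectedComponentIn_subset {X : Type*} [MetricSpace X]
    [ProperSpace X] {F : Set X} (hF : IsClosed F) {x : X} (hx : x ∈ F)
    (hbdd : IsBounded (connectedComponentIn F x)) :
    ∃ C, IsCompact C ∧ IsClosed (F \ C) ∧ connectedComponentIn F x ⊆ C ∧ C ⊆ F := by
  obtain ⟨R, hR0, hR⟩ := hbdd.subset_ball_lt 0 x
  set K := F ∩ closedBall x R
  have hK : IsCompact K := (isCompact_closedBall x R).inter_left hF
  have hcomp : connectedComponentIn K x = connectedComponentIn F x :=
    (connectedComponentIn_mono x inter_subset_left).antisymm <|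
      isPreconnected_connectedComponentIn.subset_connectedComponentIn (mem_connectedComponentIn hx)
        fun y hy => ⟨connectedComponentIn_subset F x hy, ball_subset_closedBall (hR hy)⟩
  obtain ⟨C, hC, hKC, hxC, hCK⟩ := hK.exists_isCompact_connectedComponentIn_subset isOpen_ball
    ⟨hx, mem_closedBall_self hR0.le⟩ (hcomp ▸ hR)
  have hFC : F \ C = (K \ C) ∪ (F \ ball x R) := by
    ext y
    constructor
    · rintro ⟨hyF, hyC⟩
      by_cases hy : y ∈ ball x R
      · exact Or.inl ⟨⟨hyF, ball_subset_closedBall hy⟩, hyC⟩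
      · exact Or.inr ⟨hyF, hy⟩
    · rintro (⟨⟨hyF, -⟩, hyC⟩ | ⟨hyF, hy⟩)
      · exact ⟨hyF, hyC⟩
      · exact ⟨hyF, fun hyC => hy (hCK hyC).2⟩
  exact ⟨C, hC, hFC ▸ hKC.union (hF.sdiff isOpen_ball), hcomp ▸ hxC, fun y hy => (hCK hy).1.1⟩

theorem IsCompact.exists_pos_connectedComponentIn_cthickening_subset {X : Type*}
    [PseudoMetricSpace X] {C F : Set X} (hC : IsCompact C) (hCF : C ⊆ F) (hFC : IsClosed (F \ C)) :
    ∃ δ > 0, ∀ ε ≤ δ, ∀ x ∈ C, connectedComponentIn (cthickening ε F) x ⊆ cthickening ε C := by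
  obtain ⟨δ, hδ, hdisj⟩ := disjoint_sdiff_right.exists_cthickenings hC hFC
  refine ⟨δ, hδ, fun ε hε x hx => ?_⟩
  rw [← union_sdiff_cancel hCF, cthickening_union]
  exact connectedComponentIn_union_subset_left isClosed_cthickening isClosed_cthickening
    (hdisj.mono (cthickening_mono hε _) (cthickening_mono hε _)) (self_subset_cthickening C hx)

theorem Metric.setOf_infDist_le_eq_cthickening {X : Type*} [PseudoMetricSpace X] {s : Set X}
    (hs : s.Nonempty) {r : ℝ} (hr : 0 ≤ r) : {y | infDist y s ≤ r} = cthickening r s := by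
  ext y
  simp [mem_cthickening_iff, infDist, ENNReal.le_ofReal_iff_toReal_le (infEDist_ne_top hs) hr]

theorem exists_bounded_neighbourhood_component_general {d : ℕ}
    (U : Set (EuclideanSpace ℝ (Fin d))) (hUopen : IsOpen U)
    (E : Set (EuclideanSpace ℝ (Fin d))) (x₀ : EuclideanSpace ℝ (Fin d))
    (hx₀ : x₀ ∈ Uᶜ) (hE : E = connectedComponentIn Uᶜ x₀)
    (hEbdd : Bornology.IsBounded E) :
    ∃ n : ℕ, 0 < n ∧ ∀ x ∈ E,
      Bornology.IsBounded
        (connectedComponentIn {y | Metric.infDist y Uᶜ ≤ 1 / (n : ℝ)} x) := by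
  subst hE
  obtain ⟨C, hC, hUC, hEC, hCU⟩ :=
    hUopen.isClosed_compl.exists_isCompact_connectedComponentIn_subset hx₀ hEbdd
  obtain ⟨δ, hδ, hsep⟩ := hC.exists_pos_connectedComponentIn_cthickening_subset hCU hUC
  obtain ⟨n, hn⟩ := exists_nat_one_div_lt hδ
  have hεδ : 1 / ((n + 1 : ℕ) : ℝ) ≤ δ := by push_cast; exact hn.le
  refine ⟨n + 1, n.succ_pos, fun x hx => ?_⟩
  rw [setOf_infDist_le_eq_cthickening ⟨x₀, hx₀⟩ (by positivity)]
  exact hC.isBounded.cthickening.subset (hsep _ hεδ x (hEC hx))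

/-- Let `d ≥ 1`, let `U ⊆ ℝ^d` be open and let `E` be a bounded connected component
of `ℝ^d \ U`. Then there exists `n ∈ ℕ`, `n > 0`, such that the connected component of
`{y : dist(y, ℝ^d \ U) ≤ 1/n}` containing `E` is bounded. -/
theorem exists_bounded_neighbourhood_component {d : ℕ} (hd : 1 ≤ d)
    (U : Set (EuclideanSpace ℝ (Fin d))) (hUopen : IsOpen U)
    (E : Set (EuclideanSpace ℝ (Fin d))) (x₀ : EuclideanSpace ℝ (Fin d))
    (hx₀ : x₀ ∈ Uᶜ) (hE : E = connectedComponentIn Uᶜ x₀)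
    (hEbdd : Bornology.IsBounded E) :
    ∃ n : ℕ, 0 < n ∧ ∀ x ∈ E,
      Bornology.IsBounded
        (connectedComponentIn {y | Metric.infDist y Uᶜ ≤ 1 / (n : ℝ)} x) :=
  exists_bounded_neighbourhood_component_general U hUopen E x₀ hx₀ hE hEbdd
end

section
/- Let φ : (0,∞) → (0,∞) be a function such that log φ(r) / log r → ∞ as r → ∞. Suppose r₀ > 0 is such that the iterates φ^k(r₀) tend to ∞ as k → ∞. Then (log log φ^k(r₀)) / k → ∞ as k → ∞. -/
open Filter

/-- Let `φ : (0,∞) → (0,∞)` satisfy `log φ(r) / log r → ∞` as `r → ∞`, and suppose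
`r₀ > 0` is such that the iterates `φ^k(r₀) → ∞` as `k → ∞`. Then
`(log log φ^k(r₀)) / k → ∞` as `k → ∞`. -/
theorem loglog_iterates_over_k_tendsto_atTop (φ : ℝ → ℝ)
    (hφpos : ∀ r : ℝ, 0 < r → 0 < φ r)
    (hgrowth : Tendsto (fun r : ℝ => Real.log (φ r) / Real.log r) atTop atTop)
    (r₀ : ℝ) (hr₀ : 0 < r₀)
    (hiter : Tendsto (fun k : ℕ => φ^[k] r₀) atTop atTop) :
    Tendsto (fun k : ℕ => Real.log (Real.log (φ^[k] r₀)) / (k : ℝ)) atTop atTop := by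
  rw [tendsto_atTop]
  intro b
  set M : ℝ := Real.exp (2 * (|b| + 1)) with hMdef
  have habs : (0:ℝ) ≤ |b| := abs_nonneg b
  have hM1 : 1 ≤ M := by
    rw [hMdef]
    have h := Real.add_one_le_exp (2 * (|b| + 1))
    linarith
  have hlogM : Real.log M = 2 * (|b| + 1) := Real.log_exp _
  obtain ⟨R₁, hR₁⟩ := eventually_atTop.mp (tendsto_atTop.mp hgrowth M)
  set R : ℝ := max R₁ (Real.exp 1) with hRdef
  have hlogR : ∀ r : ℝ, R ≤ r → 1 ≤ Real.log r := by
    intro r hr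
    have h1 : Real.exp 1 ≤ r := le_trans (le_max_right _ _) hr
    calc (1:ℝ) = Real.log (Real.exp 1) := (Real.log_exp 1).symm
      _ ≤ Real.log r := Real.log_le_log (Real.exp_pos 1) h1
  obtain ⟨K, hK⟩ := eventually_atTop.mp (tendsto_atTop.mp hiter R)
  have key : ∀ n : ℕ, M ^ n ≤ Real.log (φ^[K + n] r₀) := by
    intro n
    induction n with
    | zero =>
      simpa using hlogR _ (hK K le_rfl)
    | succ n ih =>
      have hRn : R ≤ φ^[K + n] r₀ := hK _ (Nat.le_add_right _ _)
      have hlogn : 1 ≤ Real.log (φ^[K + n] r₀) := hlogR _ hRn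
      have h1 : M ≤ Real.log (φ (φ^[K + n] r₀)) / Real.log (φ^[K + n] r₀) :=
        hR₁ _ (le_trans (le_max_left _ _) hRn)
      have h2 : M * Real.log (φ^[K + n] r₀) ≤ Real.log (φ (φ^[K + n] r₀)) := by
        rw [← le_div_iff₀ (by linarith)]
        exact h1
      have h3 : K + (n + 1) = (K + n) + 1 := by ring
      rw [h3, Function.iterate_succ_apply']
      calc M ^ (n + 1) = M * M ^ n := by ring
        _ ≤ M * Real.log (φ^[K + n] r₀) :=
            mul_le_mul_of_nonneg_left ih (by linarith)
        _ ≤ _ := h2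
  refine eventually_atTop.mpr ⟨max (2 * K) 1, fun k hk => ?_⟩
  have hk1 : 1 ≤ k := le_trans (le_max_right _ _) hk
  have hk2K : 2 * K ≤ k := le_trans (le_max_left _ _) hk
  have hkK : K ≤ k := le_trans (Nat.le_mul_of_pos_left _ (by norm_num)) hk2K
  have hn : K + (k - K) = k := Nat.add_sub_cancel' hkK
  have hkey : M ^ (k - K) ≤ Real.log (φ^[k] r₀) := by
    have := key (k - K); rwa [hn] at this
  have hMpos : (0:ℝ) < M := lt_of_lt_of_le one_pos hM1
  have h4 : Real.log (M ^ (k - K)) ≤ Real.log (Real.log (φ^[k] r₀)) :=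
    Real.log_le_log (pow_pos hMpos _) hkey
  rw [Real.log_pow, hlogM] at h4
  have hcast : ((k - K : ℕ) : ℝ) = (k : ℝ) - K := by
    push_cast [Nat.cast_sub hkK]; ring
  have hkpos : (0:ℝ) < (k : ℝ) := by exact_mod_cast hk1
  rw [le_div_iff₀ hkpos]
  have hKk : (K : ℝ) ≤ (k : ℝ) / 2 := by
    have : ((2 * K : ℕ) : ℝ) ≤ (k : ℝ) := by exact_mod_cast hk2K
    push_cast at this; linarith
  have hb : b ≤ |b| := le_abs_self b
  have h5 : (k : ℝ) * (|b| + 1) ≤ ((k - K : ℕ) : ℝ) * (2 * (|b| + 1)) := by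
    rw [hcast]; nlinarith
  nlinarith
end

section
/- In the Drasin–Sastry parameter construction, the sequence (r_n)_{n ≥ n₀} is well defined and strictly increasing, and moreover r_{n+1} ≥ r_n^{n₀} for every n ≥ n₀. -/
/-!
Since `ν ≥ n₀` on `[1, r_n]`, `log r_{n+1} = ∫_1^{r_n} ν(t)/t dt ≥ n₀ log r_n`, i.e.
`r_{n+1} ≥ r_n ^ n₀`, which exceeds `r_n` because `r_n > 1` and `n₀ ≥ 2`. The induction carrying
this bound runs on the pair `(r_n, log r_{n+1})`: on the new piece `[r_n, r_{n+1}]` the ramp is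
`≥ n ≥ n₀`, so the integral grows by at least `n₀ (log r_{n+1} - log r_n)`.
-/

open Real MeasureTheory intervalIntegral Set

namespace DrasinSastry

noncomputable def ramp (a b : ℝ) (n : ℕ) (t : ℝ) : ℝ := (t - a) / (b - a) + n

noncomputable def rampIntegral (a b : ℝ) (n : ℕ) : ℝ := ∫ t in a..b, ramp a b n t / t

lemma ramp_left (a b : ℝ) (n : ℕ) : ramp a b n a = n := by simp [ramp]

lemma ramp_right {a b : ℝ} (hab : a ≠ b) (n : ℕ) : ramp a b n b = n + 1 := by
  rw [ramp, div_self (sub_ne_zero.2 hab.symm)]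
  ring

lemma intervalIntegrable_div_self {f : ℝ → ℝ} {a b : ℝ} (hf : Continuous f) (ha : 0 < a)
    (hab : a ≤ b) : IntervalIntegrable (fun t => f t / t) volume a b :=
  (hf.continuousOn.div continuousOn_id fun t ht => by
    rw [uIcc_of_le hab] at ht; exact (ha.trans_le ht.1).ne').intervalIntegrable

lemma integral_const_div_self {a b : ℝ} (c : ℝ) (ha : 0 < a) (hab : a ≤ b) :
    ∫ t in a..b, c / t = c * (log b - log a) := by
  have h0 : (0 : ℝ) ∉ uIcc a b := by
    rw [uIcc_of_le hab]; exact fun h => h.1.not_gt ha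
  simp_rw [div_eq_mul_inv c]
  rw [intervalIntegral.integral_const_mul, integral_inv h0, log_div (by linarith) ha.ne']

lemma mul_log_sub_le_rampIntegral {a b : ℝ} (ha : 0 < a) (hab : a ≤ b) (n : ℕ) :
    n * (log b - log a) ≤ rampIntegral a b n := by
  rw [← integral_const_div_self _ ha hab]
  refine integral_mono_on hab (intervalIntegrable_div_self continuous_const ha hab)
    (intervalIntegrable_div_self (by unfold ramp; fun_prop) ha hab) fun t ht => ?_
  have hramp : (n : ℝ) ≤ ramp a b n t :=
    le_add_of_nonneg_left (div_nonneg (by linarith [ht.1]) (by linarith))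
  gcongr
  linarith [ht.1]

section Interpolation

variable {r : ℕ → ℝ} {n₀ k : ℕ} {t : ℝ}

/-- For increasing nodes `r`, `Nat.find h` is the index of the piece `[r k, r (k + 1))` containing
`t`; the value `0` beyond all nodes is junk. -/
noncomputable def nu (r : ℕ → ℝ) (n₀ : ℕ) (t : ℝ) : ℝ :=
  open Classical in
  if t < r 0 then n₀
  else if h : ∃ k, t < r (k + 1) then ramp (r (Nat.find h)) (r (Nat.find h + 1)) (n₀ + Nat.find h) t
  else 0

lemma nu_eq_ramp_of_mem_Ico (hr : StrictMono r) (hk : r k ≤ t) (hk' : t < r (k + 1)) :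
    nu r n₀ t = ramp (r k) (r (k + 1)) (n₀ + k) t := by
  classical
  have hex : ∃ j, t < r (j + 1) := ⟨k, hk'⟩
  rw [nu, if_neg (hr.monotone k.zero_le |>.trans hk).not_gt, dif_pos hex]
  suffices Nat.find hex = k by rw [this]
  refine le_antisymm (Nat.find_min' hex hk') (not_lt.1 fun hlt => ?_)
  exact (Nat.find_spec hex).not_ge (hk.trans' (hr.monotone hlt))

lemma nu_eq_ramp (hr : StrictMono r) (hk : r k ≤ t) (hk' : t ≤ r (k + 1)) :
    nu r n₀ t = ramp (r k) (r (k + 1)) (n₀ + k) t := by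
  rcases hk'.lt_or_eq with hlt | rfl
  · exact nu_eq_ramp_of_mem_Ico hr hk hlt
  · rw [nu_eq_ramp_of_mem_Ico hr le_rfl (hr (k + 1).lt_succ_self), ramp_left,
      ramp_right (hr k.lt_succ_self).ne]
    push_cast
    ring

lemma nu_of_le (hr : StrictMono r) (ht : t ≤ r 0) : nu r n₀ t = n₀ := by
  rcases ht.lt_or_eq with hlt | rfl
  · simp [nu, hlt]
  · rw [nu_eq_ramp_of_mem_Ico (k := 0) hr le_rfl (hr Nat.zero_lt_one), ramp_left]
    simp

lemma integral_nu_div_of_le (hr : StrictMono r) (h1 : 1 ≤ r 0) :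
    IntervalIntegrable (fun t => nu r n₀ t / t) volume 1 (r 0) ∧
      ∫ t in (1 : ℝ)..r 0, nu r n₀ t / t = n₀ * log (r 0) := by
  have heq : EqOn (fun t => nu r n₀ t / t) (fun t => n₀ / t) (uIcc 1 (r 0)) := fun t ht => by
    rw [uIcc_of_le h1] at ht
    simp only [nu_of_le hr ht.2]
  refine ⟨(intervalIntegrable_div_self continuous_const one_pos h1).congr
    (heq.symm.mono uIoc_subset_uIcc), ?_⟩
  rw [integral_congr heq, integral_const_div_self _ one_pos h1, log_one, sub_zero]

lemma integral_nu_div_piece (hr : StrictMono r) (hpos : 0 < r 0) (k : ℕ) :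
    IntervalIntegrable (fun t => nu r n₀ t / t) volume (r k) (r (k + 1)) ∧
      ∫ t in r k..r (k + 1), nu r n₀ t / t = rampIntegral (r k) (r (k + 1)) (n₀ + k) := by
  have hle := (hr k.lt_succ_self).le
  have heq : EqOn (fun t => nu r n₀ t / t) (fun t => ramp (r k) (r (k + 1)) (n₀ + k) t / t)
      (uIcc (r k) (r (k + 1))) := fun t ht => by
    rw [uIcc_of_le hle] at ht
    simp only [nu_eq_ramp hr ht.1 ht.2]
  refine ⟨(intervalIntegrable_div_self (by unfold ramp; fun_prop)
    (hpos.trans_le (hr.monotone k.zero_le)) hle).congr (heq.symm.mono uIoc_subset_uIcc), ?_⟩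
  exact integral_congr heq

lemma integral_nu_div (hr : StrictMono r) (h1 : 1 ≤ r 0) (k : ℕ) :
    ∫ t in (1 : ℝ)..r k, nu r n₀ t / t =
      n₀ * log (r 0) + ∑ j ∈ Finset.range k, rampIntegral (r j) (r (j + 1)) (n₀ + j) := by
  have hpieces : ∀ j < k, IntervalIntegrable (fun t => nu r n₀ t / t) volume (r j) (r (j + 1)) :=
    fun j _ => (integral_nu_div_piece hr (one_pos.trans_le h1) j).1
  obtain ⟨hint₀, hval₀⟩ := integral_nu_div_of_le (n₀ := n₀) hr h1
  rw [← integral_add_adjacent_intervals hint₀ (IntervalIntegrable.trans_iterate hpieces), hval₀,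
    ← sum_integral_adjacent_intervals hpieces]
  congr 1
  exact Finset.sum_congr rfl fun j _ => (integral_nu_div_piece hr (one_pos.trans_le h1) j).2

end Interpolation

/-- `stage n₀ R' k = (r_{n₀+k}, ∫_1^{r_{n₀+k}} ν(t)/t dt)`. Carrying the integral along, computed
piece by piece, defines the radii before `ν`, which is then interpolated from them. -/
noncomputable def stage (n₀ : ℕ) (R' : ℝ) : ℕ → ℝ × ℝ
  | 0 => (R', n₀ * log R')
  | k + 1 =>
      ((exp (stage n₀ R' k).2),
        (stage n₀ R' k).2 + rampIntegral (stage n₀ R' k).1 (exp (stage n₀ R' k).2) (n₀ + k))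

noncomputable def radius (n₀ : ℕ) (R' : ℝ) (k : ℕ) : ℝ := (stage n₀ R' k).1

noncomputable def logIntegral (n₀ : ℕ) (R' : ℝ) (k : ℕ) : ℝ := (stage n₀ R' k).2

section Radii

variable {n₀ : ℕ} {R' : ℝ}

lemma radius_zero : radius n₀ R' 0 = R' := rfl

lemma radius_succ (k : ℕ) : radius n₀ R' (k + 1) = exp (logIntegral n₀ R' k) := rfl

lemma logIntegral_succ (k : ℕ) : logIntegral n₀ R' (k + 1) =
    logIntegral n₀ R' k + rampIntegral (radius n₀ R' k) (radius n₀ R' (k + 1)) (n₀ + k) := rfl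

lemma logIntegral_eq_sum (k : ℕ) : logIntegral n₀ R' k = n₀ * log R' +
    ∑ j ∈ Finset.range k, rampIntegral (radius n₀ R' j) (radius n₀ R' (j + 1)) (n₀ + j) := by
  induction k with
  | zero => simp [logIntegral, stage]
  | succ k ih => rw [logIntegral_succ, ih, Finset.sum_range_succ, add_assoc]

lemma pow_le_exp_of_mul_log_le {a x : ℝ} {n : ℕ} (ha : 0 < a) (h : n * log a ≤ x) :
    a ^ n ≤ exp x :=
  (log_le_iff_le_exp (pow_pos ha n)).1 (by rwa [log_pow])

lemma one_lt_radius_and_mul_log_le (hn₀ : 1 ≤ n₀) (hR' : 1 < R') (k : ℕ) :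
    1 < radius n₀ R' k ∧ n₀ * log (radius n₀ R' k) ≤ logIntegral n₀ R' k := by
  induction k with
  | zero => exact ⟨hR', le_rfl⟩
  | succ k ih =>
    obtain ⟨ha, hlog⟩ := ih
    set a := radius n₀ R' k
    set b := radius n₀ R' (k + 1)
    have hab : a ≤ b := calc
      a ≤ a ^ n₀ := le_self_pow₀ ha.le (by omega)
      _ ≤ b := pow_le_exp_of_mul_log_le (by linarith) hlog
    refine ⟨ha.trans_le hab, ?_⟩
    have hlogab : 0 ≤ log b - log a := sub_nonneg.2 (log_le_log (by linarith) hab)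
    calc (n₀ : ℝ) * log b = n₀ * log a + n₀ * (log b - log a) := by ring
      _ ≤ logIntegral n₀ R' k + (n₀ + k : ℕ) * (log b - log a) := by gcongr; omega
      _ ≤ logIntegral n₀ R' (k + 1) := by
        rw [logIntegral_succ]
        gcongr
        exact mul_log_sub_le_rampIntegral (by linarith) hab _

lemma pow_le_radius_succ (hn₀ : 1 ≤ n₀) (hR' : 1 < R') (k : ℕ) :
    radius n₀ R' k ^ n₀ ≤ radius n₀ R' (k + 1) :=
  have h := one_lt_radius_and_mul_log_le hn₀ hR' k
  pow_le_exp_of_mul_log_le (by linarith [h.1]) h.2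

lemma strictMono_radius (hn₀ : 2 ≤ n₀) (hR' : 1 < R') : StrictMono (radius n₀ R') :=
  strictMono_nat_of_lt_succ fun k =>
    (lt_self_pow₀ (one_lt_radius_and_mul_log_le (by omega) hR' k).1 (by omega)).trans_le
      (pow_le_radius_succ (by omega) hR' k)

lemma radius_succ_eq_exp_integral (hn₀ : 2 ≤ n₀) (hR' : 1 < R') (k : ℕ) :
    radius n₀ R' (k + 1) = exp (∫ t in (1 : ℝ)..radius n₀ R' k, nu (radius n₀ R') n₀ t / t) := by
  rw [radius_succ, logIntegral_eq_sum, integral_nu_div (strictMono_radius hn₀ hR') hR'.le,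
    radius_zero]

end Radii

end DrasinSastry

/-- The Drasin–Sastry parameter construction: given an integer `n₀ ≥ 2` and a real
`R' > 4`, there exist `ν : ℝ → ℝ` and a sequence `r : ℕ → ℝ` with `ν = n₀` on
`[0, R']`, `r n₀ = R'`, `r (n+1) = exp (∫_1^{r n} ν(t)/t dt)` for `n ≥ n₀`, and
`ν` linear from `n` to `n+1` on `[r n, r (n+1)]`; i.e. the construction is well
defined. Moreover the sequence `(r n)` is strictly increasing for `n ≥ n₀` and
satisfies `r (n+1) ≥ (r n) ^ n₀`. -/
theorem drasinSastry_well_defined (n₀ : ℕ) (hn₀ : 2 ≤ n₀) (R' : ℝ) (hR' : 4 < R') :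
    ∃ (ν : ℝ → ℝ) (r : ℕ → ℝ),
      (∀ t : ℝ, 0 ≤ t → t ≤ R' → ν t = n₀) ∧
      r n₀ = R' ∧
      (∀ n : ℕ, n₀ ≤ n → r (n + 1) = Real.exp (∫ t in (1 : ℝ)..(r n), ν t / t)) ∧
      (∀ n : ℕ, n₀ ≤ n → ∀ t : ℝ, r n ≤ t → t ≤ r (n + 1) →
        ν t = (t - r n) / (r (n + 1) - r n) + n) ∧
      (∀ n : ℕ, n₀ ≤ n → r n < r (n + 1) ∧ (r n) ^ n₀ ≤ r (n + 1)) := by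
  open DrasinSastry in
  have hR'1 : 1 < R' := by linarith
  have hmono := strictMono_radius hn₀ hR'1
  have shift : ∀ k, n₀ + k + 1 - n₀ = k + 1 := fun k => by omega
  refine ⟨nu (radius n₀ R') n₀, fun n => radius n₀ R' (n - n₀), fun t _ ht => ?_, ?_, ?_, ?_, ?_⟩
  · exact nu_of_le hmono ht
  · simp [radius_zero]
  all_goals
    intro n hn
    obtain ⟨k, rfl⟩ := Nat.exists_eq_add_of_le hn
    simp only [shift, Nat.add_sub_cancel_left]
  · exact radius_succ_eq_exp_integral hn₀ hR'1 k
  · exact fun t ht ht' => nu_eq_ramp hmono ht ht'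
  · exact ⟨hmono k.lt_succ_self, pow_le_radius_succ (by omega) hR'1 k⟩
end

section
/- In the Drasin–Sastry parameter construction, n · log(r_{n+1}/r_n) → ∞ as n → ∞. -/
/-!
Since `ν ≥ n₀ ≥ 2` on `[1, r n]`, `log r (n+1) = ∫₁^{r n} ν t / t dt ≥ 2 log r n`, hence
`log (r (n+1) / r n) ≥ log r n ≥ log R' > 0` and `n log (r (n+1) / r n) ≥ n log R' → ∞`.
The bound `ν ≥ n₀` on `[1, r n]`, together with `r n ≥ R'` and the integrability of `ν t / t`,
is carried along by induction: on the new piece `[r n, r (n+1)]` the affine `ν` is at least `n`.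
-/

open Filter MeasureTheory Set Real

theorem mul_log_le_integral_div {f : ℝ → ℝ} {a c : ℝ} (ha : 1 ≤ a)
    (hf : ∀ t ∈ Icc 1 a, c ≤ f t) (hint : IntervalIntegrable (fun t => f t / t) volume 1 a) :
    c * log a ≤ ∫ t in 1..a, f t / t := by
  have hcont : ContinuousOn (fun t => c / t) (Icc 1 a) :=
    continuousOn_const.div continuousOn_id fun t ht => (zero_lt_one.trans_le ht.1).ne'
  calc c * log a = ∫ t in 1..a, c / t := by
        simp only [div_eq_mul_inv, intervalIntegral.integral_const_mul,
          integral_inv_of_pos one_pos (by linarith), inv_one, mul_one]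
    _ ≤ ∫ t in 1..a, f t / t :=
        intervalIntegral.integral_mono_on ha (hcont.intervalIntegrable_of_Icc ha) hint
          fun t ht => div_le_div_of_nonneg_right (hf t ht) (by linarith [ht.1])

theorem intervalIntegrable_div_id_of_eqOn_Ioc {f g : ℝ → ℝ} {a b : ℝ} (ha : 0 < a)
    (hab : a ≤ b) (hg : ContinuousOn g (Icc a b)) (hfg : EqOn f g (Ioc a b)) :
    IntervalIntegrable (fun t => f t / t) volume a b := by
  have hcont : ContinuousOn (fun t => g t / t) (Icc a b) :=
    hg.div continuousOn_id fun t ht => (ha.trans_le ht.1).ne'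
  refine (hcont.intervalIntegrable_of_Icc hab).congr fun t ht => ?_
  rw [uIoc_of_le hab] at ht
  simp only [hfg ht]

structure IsDrasinSastry (n₀ : ℕ) (R' : ℝ) (ν : ℝ → ℝ) (r : ℕ → ℝ) : Prop where
  two_le : 2 ≤ n₀
  one_lt : 1 < R'
  nu_eq_of_le : ∀ t : ℝ, 0 ≤ t → t ≤ R' → ν t = n₀
  r_start : r n₀ = R'
  r_succ : ∀ n : ℕ, n₀ ≤ n → r (n + 1) = exp (∫ t in (1 : ℝ)..(r n), ν t / t)
  nu_eq_on_Icc : ∀ n : ℕ, n₀ ≤ n → ∀ t : ℝ, r n ≤ t → t ≤ r (n + 1) →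
    ν t = (t - r n) / (r (n + 1) - r n) + n

namespace IsDrasinSastry

variable {n₀ : ℕ} {R' : ℝ} {ν : ℝ → ℝ} {r : ℕ → ℝ}

theorem mul_log_le_log_succ (h : IsDrasinSastry n₀ R' ν r) {n : ℕ} (hn : n₀ ≤ n)
    (hr : 1 ≤ r n) (hν : ∀ t ∈ Icc 1 (r n), (n₀ : ℝ) ≤ ν t)
    (hint : IntervalIntegrable (fun t => ν t / t) volume 1 (r n)) :
    n₀ * log (r n) ≤ log (r (n + 1)) := by
  rw [h.r_succ n hn, log_exp]
  exact mul_log_le_integral_div hr hν hint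

theorem le_r_and_n₀_le_nu_and_intervalIntegrable (h : IsDrasinSastry n₀ R' ν r) {n : ℕ} (hn : n₀ ≤ n) :
    R' ≤ r n ∧ (∀ t ∈ Icc 1 (r n), (n₀ : ℝ) ≤ ν t) ∧
      IntervalIntegrable (fun t => ν t / t) volume 1 (r n) := by
  have hR' := h.one_lt
  induction n, hn using Nat.le_induction with
  | base =>
    rw [h.r_start]
    refine ⟨le_rfl, fun t ht => (h.nu_eq_of_le t (by linarith [ht.1]) ht.2).ge, ?_⟩
    exact intervalIntegrable_div_id_of_eqOn_Ioc one_pos hR'.le continuousOn_const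
      fun t ht => h.nu_eq_of_le t (by linarith [ht.1]) ht.2
  | succ n hn ih =>
    obtain ⟨hRr, hν, hint⟩ := ih
    have hr : 1 < r n := by linarith
    have hlog : n₀ * log (r n) ≤ log (r (n + 1)) := h.mul_log_le_log_succ hn hr.le hν hint
    have hlt : r n < r (n + 1) := by
      have : (2 : ℝ) ≤ n₀ := by exact_mod_cast h.two_le
      rw [← log_lt_log_iff (by linarith) (by rw [h.r_succ n hn]; positivity)]
      nlinarith [log_pos hr]
    refine ⟨hRr.trans hlt.le, fun t ht => ?_, hint.trans ?_⟩
    · rcases le_or_gt t (r n) with htn | htn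
      · exact hν t ⟨ht.1, htn⟩
      · have : (n₀ : ℝ) ≤ n := by exact_mod_cast hn
        rw [h.nu_eq_on_Icc n hn t htn.le ht.2]
        have : 0 ≤ (t - r n) / (r (n + 1) - r n) := div_nonneg (by linarith) (by linarith)
        linarith
    · exact intervalIntegrable_div_id_of_eqOn_Ioc (by linarith) hlt.le (by fun_prop)
        fun t ht => h.nu_eq_on_Icc n hn t ht.1.le ht.2

theorem log_le_log_div (h : IsDrasinSastry n₀ R' ν r) {n : ℕ} (hn : n₀ ≤ n) :
    log R' ≤ log (r (n + 1) / r n) := by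
  obtain ⟨hRr, hν, hint⟩ := h.le_r_and_n₀_le_nu_and_intervalIntegrable hn
  have hR' := h.one_lt
  have hlog := h.mul_log_le_log_succ hn (by linarith) hν hint
  have : (2 : ℝ) ≤ n₀ := by exact_mod_cast h.two_le
  have hrn : 0 < log (r n) := log_pos (by linarith)
  rw [log_div (by rw [h.r_succ n hn]; positivity) (by linarith)]
  nlinarith [log_le_log (by linarith) hRr]

end IsDrasinSastry

/-- In the Drasin–Sastry parameter construction, `n · log (r (n+1) / r n) → ∞` as `n → ∞`. -/
theorem drasinSastry_log_ratio_tendsto (n₀ : ℕ) (hn₀ : 2 ≤ n₀) (R' : ℝ) (hR' : 4 < R')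
    (ν : ℝ → ℝ) (r : ℕ → ℝ)
    (hν₀ : ∀ t : ℝ, 0 ≤ t → t ≤ R' → ν t = n₀)
    (hrn₀ : r n₀ = R')
    (hrec : ∀ n : ℕ, n₀ ≤ n → r (n + 1) = Real.exp (∫ t in (1 : ℝ)..(r n), ν t / t))
    (hνlin : ∀ n : ℕ, n₀ ≤ n → ∀ t : ℝ, r n ≤ t → t ≤ r (n + 1) →
      ν t = (t - r n) / (r (n + 1) - r n) + n) :
    Tendsto (fun n : ℕ => (n : ℝ) * Real.log (r (n + 1) / r n)) atTop atTop := by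
  have h : IsDrasinSastry n₀ R' ν r := ⟨hn₀, by linarith, hν₀, hrn₀, hrec, hνlin⟩
  refine tendsto_atTop_mono' atTop (eventually_atTop.2 ⟨n₀, fun n hn => ?_⟩)
    (tendsto_natCast_atTop_atTop.atTop_mul_const (log_pos h.one_lt))
  exact mul_le_mul_of_nonneg_left (h.log_le_log_div hn) n.cast_nonneg
end

section
/- In the Drasin–Sastry parameter construction, for every n ≥ n₀ with 2 r_n ≤ r_{n+1} one has L(2 r_n) ≥ 2^n · L(r_n) = 2^n · r_{n+1}. -/
open Set MeasureTheory

/-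
On `[r n, 2 r n] ⊆ [r n, r (n+1)]` the interpolated `ν` is at least `n`, so
`∫_{r n}^{2 r n} ν t / t dt ≥ n log 2`, and exponentiating the splitting of `∫_1^{2 r n}` at `r n`
gives `L (2 r n) ≥ 2^n L (r n)`. The splitting needs `t ↦ ν t / t` integrable on `[1, r n]`; this,
together with `1 ≤ r n` and `1 ≤ ν` on `[1, r n]` (which makes `r` increasing, since
`r (n+1) ≥ exp ∫_1^{r n} dt / t = r n`), is proved by induction on `n`.
-/

theorem intervalIntegrable_div_id_of_eqOn {ν g : ℝ → ℝ} {a b : ℝ} (ha : 0 < a) (hab : a ≤ b)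
    (hg : ContinuousOn g (Icc a b)) (hνg : EqOn ν g (Icc a b)) :
    IntervalIntegrable (fun t => ν t / t) volume a b := by
  have hcont : ContinuousOn (fun t => g t / t) (uIcc a b) := by
    rw [uIcc_of_le hab]
    exact hg.div continuousOn_id fun t ht => (ha.trans_le ht.1).ne'
  refine hcont.intervalIntegrable.congr fun t ht => ?_
  rw [uIoc_of_le hab] at ht
  simp only [hνg (Ioc_subset_Icc_self ht)]

theorem div_pow_le_exp_integral_div {ν : ℝ → ℝ} {a b : ℝ} {k : ℕ} (ha : 0 < a) (hab : a ≤ b)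
    (hν : IntervalIntegrable (fun t => ν t / t) volume a b) (hk : ∀ t ∈ Icc a b, (k : ℝ) ≤ ν t) :
    (b / a) ^ k ≤ Real.exp (∫ t in a..b, ν t / t) := by
  have h0 : (0 : ℝ) ∉ uIcc a b := by
    rw [uIcc_of_le hab]
    exact fun h => ha.not_ge h.1
  have hconst : ∫ t in a..b, (k : ℝ) / t = k * Real.log (b / a) := by
    simp only [div_eq_mul_inv, intervalIntegral.integral_const_mul, integral_inv h0]
  have hint : IntervalIntegrable (fun t => (k : ℝ) / t) volume a b :=
    (continuousOn_const.div continuousOn_id fun t ht => by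
      rintro rfl; exact h0 ht).intervalIntegrable
  have hmono : k * Real.log (b / a) ≤ ∫ t in a..b, ν t / t := by
    rw [← hconst]
    refine intervalIntegral.integral_mono_on hab hint hν fun t ht => ?_
    exact div_le_div_of_nonneg_right (hk t ht) (ha.le.trans ht.1)
  calc (b / a) ^ k = Real.exp (k * Real.log (b / a)) := by
        rw [Real.exp_nat_mul, Real.exp_log (div_pos (ha.trans_le hab) ha)]
    _ ≤ _ := Real.exp_le_exp.2 hmono

section DrasinSastry

variable {n₀ : ℕ} {ν : ℝ → ℝ} {r : ℕ → ℝ}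

theorem drasinSastry_nat_le_nu
    (hνlin : ∀ n : ℕ, n₀ ≤ n → ∀ t : ℝ, r n ≤ t → t ≤ r (n + 1) →
      ν t = (t - r n) / (r (n + 1) - r n) + n)
    {n : ℕ} (hn : n₀ ≤ n) {t : ℝ} (ht : t ∈ Icc (r n) (r (n + 1))) : (n : ℝ) ≤ ν t := by
  rw [hνlin n hn t ht.1 ht.2]
  have : 0 ≤ (t - r n) / (r (n + 1) - r n) :=
    div_nonneg (by linarith [ht.1]) (by linarith [ht.1.trans ht.2])
  linarith

theorem drasinSastry_intervalIntegrable_step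
    (hνlin : ∀ n : ℕ, n₀ ≤ n → ∀ t : ℝ, r n ≤ t → t ≤ r (n + 1) →
      ν t = (t - r n) / (r (n + 1) - r n) + n)
    {n : ℕ} (hn : n₀ ≤ n) (hpos : 0 < r n) (hle : r n ≤ r (n + 1)) :
    IntervalIntegrable (fun t => ν t / t) volume (r n) (r (n + 1)) :=
  intervalIntegrable_div_id_of_eqOn hpos hle
    (((continuousOn_id.sub continuousOn_const).div_const _).add continuousOn_const)
    fun t ht => hνlin n hn t ht.1 ht.2

theorem drasinSastry_invariant (hn₀ : 2 ≤ n₀) {R' : ℝ} (hR' : 4 < R')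
    (hν₀ : ∀ t : ℝ, 0 ≤ t → t ≤ R' → ν t = n₀)
    (hrn₀ : r n₀ = R')
    (hrec : ∀ n : ℕ, n₀ ≤ n → r (n + 1) = Real.exp (∫ t in (1 : ℝ)..(r n), ν t / t))
    (hνlin : ∀ n : ℕ, n₀ ≤ n → ∀ t : ℝ, r n ≤ t → t ≤ r (n + 1) →
      ν t = (t - r n) / (r (n + 1) - r n) + n)
    {n : ℕ} (hn : n₀ ≤ n) :
    1 ≤ r n ∧ IntervalIntegrable (fun t => ν t / t) volume 1 (r n) ∧
      ∀ t ∈ Icc 1 (r n), 1 ≤ ν t := by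
  induction n, hn using Nat.le_induction with
  | base =>
    have hν₀' : EqOn ν (fun _ => (n₀ : ℝ)) (Icc 1 (r n₀)) := fun t ht =>
      hν₀ t (by linarith [ht.1]) (hrn₀ ▸ ht.2)
    refine ⟨by linarith, ?_, fun t ht => ?_⟩
    · exact intervalIntegrable_div_id_of_eqOn one_pos (by linarith) continuousOn_const hν₀'
    · rw [hν₀' ht]
      exact Nat.one_le_cast.2 (by omega)
  | succ n hn ih =>
    obtain ⟨hr1, hint, hν1⟩ := ih
    have hmono : r n ≤ r (n + 1) := by
      simpa [← hrec n hn] using div_pow_le_exp_integral_div (k := 1) one_pos hr1 hint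
        (by exact_mod_cast hν1)
    have hstep := drasinSastry_intervalIntegrable_step hνlin hn (by linarith) hmono
    refine ⟨hr1.trans hmono, hint.trans hstep, fun t ht => ?_⟩
    rcases le_or_gt t (r n) with htn | htn
    · exact hν1 t ⟨ht.1, htn⟩
    · calc (1 : ℝ) ≤ n := Nat.one_le_cast.2 (by omega)
        _ ≤ ν t := drasinSastry_nat_le_nu hνlin hn ⟨htn.le, ht.2⟩

end DrasinSastry

/-- In the Drasin–Sastry parameter construction, for every `n ≥ n₀` with `2 r_n ≤ r_{n+1}` one has `L (2 r_n) ≥ 2^n · L (r_n) = 2^n · r_{n+1}`. -/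
theorem drasinSastry_L_two_rn_lower (n₀ : ℕ) (hn₀ : 2 ≤ n₀) (R' : ℝ) (hR' : 4 < R')
    (ν : ℝ → ℝ) (r : ℕ → ℝ)
    (hν₀ : ∀ t : ℝ, 0 ≤ t → t ≤ R' → ν t = n₀)
    (hrn₀ : r n₀ = R')
    (hrec : ∀ n : ℕ, n₀ ≤ n → r (n + 1) = Real.exp (∫ t in (1 : ℝ)..(r n), ν t / t))
    (hνlin : ∀ n : ℕ, n₀ ≤ n → ∀ t : ℝ, r n ≤ t → t ≤ r (n + 1) →
      ν t = (t - r n) / (r (n + 1) - r n) + n)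
    (L : ℝ → ℝ) (hL : ∀ s : ℝ, L s = Real.exp (∫ t in (1 : ℝ)..s, ν t / t)) :
    ∀ n : ℕ, n₀ ≤ n → 2 * r n ≤ r (n + 1) →
      (2 : ℝ) ^ n * L (r n) ≤ L (2 * r n) ∧ L (r n) = r (n + 1) := by
  intro n hn h2
  obtain ⟨hr1, hint, -⟩ := drasinSastry_invariant hn₀ hR' hν₀ hrn₀ hrec hνlin hn
  have hpos : 0 < r n := by linarith
  have hint₂ : IntervalIntegrable (fun t => ν t / t) volume (r n) (2 * r n) :=
    (drasinSastry_intervalIntegrable_step hνlin hn hpos (by linarith)).mono_set <| by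
      rw [uIcc_of_le (by linarith), uIcc_of_le (by linarith)]
      exact Icc_subset_Icc_right h2
  have hlow : (2 : ℝ) ^ n ≤ Real.exp (∫ t in (r n)..(2 * r n), ν t / t) := by
    simpa [hpos.ne'] using div_pow_le_exp_integral_div hpos (by linarith) hint₂
      fun t ht => drasinSastry_nat_le_nu hνlin hn ⟨ht.1, ht.2.trans h2⟩
  refine ⟨?_, by rw [hL, hrec n hn]⟩
  rw [hL, hL, ← intervalIntegral.integral_add_adjacent_intervals hint hint₂, Real.exp_add, mul_comm]
  exact mul_le_mul_of_nonneg_left hlow (Real.exp_pos _).le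
end

section
/- In the Drasin–Sastry parameter construction, for every ε ∈ (0,1) and every n ≥ n₀ with r_n ≤ ε r_{n+1} one has L(ε r_{n+1}) ≤ ε^n · L(r_{n+1}) = ε^n · r_{n+2}. -/
/-!
By induction along the construction, `r` increases from `R'` and `ν` is monotone on `[0, r k]`,
hence `ν ≥ ν 0 = n₀` there; comparing `∫₁^{r k} ν t / t` with `n₀ log (r k)` gives
`r (k + 1) ≥ (r k) ^ n₀ ≥ r k`, which keeps the induction going. For the estimate itself,
`[ε r_{n+1}, r_{n+1}] ⊆ [r_n, r_{n+1}]`, where `ν ≥ n`, so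
`log L (r_{n+1}) - log L (ε r_{n+1}) = ∫ ν t / t ≥ n log (1 / ε)`.
-/

open Real Set MeasureTheory

theorem IntervalIntegrable.div_id {f : ℝ → ℝ} {a b : ℝ} (hf : IntervalIntegrable f volume a b)
    (h0 : (0 : ℝ) ∉ uIcc a b) : IntervalIntegrable (fun t => f t / t) volume a b := by
  simpa only [div_eq_mul_inv] using
    hf.mul_continuousOn (continuousOn_inv₀.mono fun t ht (h : t = 0) => h0 (h ▸ ht))

theorem MonotoneOn.intervalIntegrable_of_le {f : ℝ → ℝ} {a b c : ℝ} (hf : MonotoneOn f (Icc a c))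
    (hab : a ≤ b) (hbc : b ≤ c) : IntervalIntegrable f volume b c :=
  (hf.mono (by rw [uIcc_of_le hbc]; exact Icc_subset_Icc hab le_rfl)).intervalIntegrable

theorem pow_div_le_exp_integral_div_id {f : ℝ → ℝ} {a b : ℝ} {n : ℕ} (ha : 0 < a) (hab : a ≤ b)
    (hf : IntervalIntegrable f volume a b) (hn : ∀ t ∈ Icc a b, (n : ℝ) ≤ f t) :
    (b / a) ^ n ≤ exp (∫ t in a..b, f t / t) := by
  have h0 : (0 : ℝ) ∉ uIcc a b := notMem_uIcc_of_lt ha (ha.trans_le hab)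
  have hconst : ∫ t in a..b, (n : ℝ) / t = n * log (b / a) := by
    simp_rw [div_eq_mul_inv (n : ℝ), intervalIntegral.integral_const_mul, integral_inv h0]
  calc (b / a) ^ n = exp (n * log (b / a)) := by
        rw [exp_nat_mul, exp_log (div_pos (ha.trans_le hab) ha)]
    _ ≤ exp (∫ t in a..b, f t / t) := by
        rw [← hconst]
        gcongr
        refine intervalIntegral.integral_mono_on hab (intervalIntegrable_const.div_id h0)
          (hf.div_id h0) fun t ht => ?_
        gcongr
        · exact ha.le.trans ht.1
        · exact hn t ht

theorem monotoneOn_of_eq_div_add {f : ℝ → ℝ} {a b c : ℝ} (hab : a ≤ b)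
    (hf : ∀ t, a ≤ t → t ≤ b → f t = (t - a) / (b - a) + c) : MonotoneOn f (Icc a b) := by
  refine MonotoneOn.congr (f₁ := fun t => (t - a) / (b - a) + c) ?_
    fun t ht => (hf t ht.1 ht.2).symm
  intro s _ t _ hst
  dsimp only
  gcongr

theorem drasinSastry_le_r_and_monotoneOn {n₀ : ℕ} {R' : ℝ} {ν : ℝ → ℝ} {r : ℕ → ℝ}
    (hn₀ : 1 ≤ n₀) (hR' : 1 ≤ R') (hν₀ : ∀ t : ℝ, 0 ≤ t → t ≤ R' → ν t = n₀) (hrn₀ : r n₀ = R')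
    (hrec : ∀ n : ℕ, n₀ ≤ n → r (n + 1) = exp (∫ t in (1 : ℝ)..(r n), ν t / t))
    (hνlin : ∀ n : ℕ, n₀ ≤ n → ∀ t : ℝ, r n ≤ t → t ≤ r (n + 1) →
      ν t = (t - r n) / (r (n + 1) - r n) + n) {k : ℕ} (hk : n₀ ≤ k) :
    R' ≤ r k ∧ MonotoneOn ν (Icc 0 (r k)) := by
  induction k, hk using Nat.le_induction with
  | base =>
    refine ⟨hrn₀.ge, ?_⟩
    rw [hrn₀]
    intro s hs t ht _
    rw [hν₀ s hs.1 hs.2, hν₀ t ht.1 ht.2]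
  | succ k hk ih =>
    obtain ⟨hRk, hmono⟩ := ih
    have hk1 : 1 ≤ r k := hR'.trans hRk
    have hν_ge : ∀ t ∈ Icc 1 (r k), (n₀ : ℝ) ≤ ν t := fun t ht =>
      hν₀ 0 le_rfl (by linarith) ▸
        hmono ⟨le_rfl, by linarith⟩ ⟨by linarith [ht.1], ht.2⟩ (by linarith [ht.1])
    have hstep : r k ≤ r (k + 1) := by
      have hint := hmono.intervalIntegrable_of_le zero_le_one hk1
      calc r k ≤ (r k / 1) ^ n₀ := by rw [div_one]; exact le_self_pow₀ hk1 (by omega)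
        _ ≤ r (k + 1) := hrec k hk ▸ pow_div_le_exp_integral_div_id one_pos hk1 hint hν_ge
    refine ⟨hRk.trans hstep, ?_⟩
    rw [← Icc_union_Icc_eq_Icc (by linarith) hstep]
    exact hmono.union_right (monotoneOn_of_eq_div_add hstep (hνlin k hk))
      (isGreatest_Icc (by linarith)) (isLeast_Icc hstep)

/-- In the Drasin–Sastry parameter construction, for every `ε ∈ (0,1)` and every `n ≥ n₀` with `r_n ≤ ε r_{n+1}` one has `L (ε r_{n+1}) ≤ ε^n · L (r_{n+1}) = ε^n · r_{n+2}`. -/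
theorem drasinSastry_L_eps_upper (n₀ : ℕ) (hn₀ : 2 ≤ n₀) (R' : ℝ) (hR' : 4 < R')
    (ν : ℝ → ℝ) (r : ℕ → ℝ)
    (hν₀ : ∀ t : ℝ, 0 ≤ t → t ≤ R' → ν t = n₀)
    (hrn₀ : r n₀ = R')
    (hrec : ∀ n : ℕ, n₀ ≤ n → r (n + 1) = Real.exp (∫ t in (1 : ℝ)..(r n), ν t / t))
    (hνlin : ∀ n : ℕ, n₀ ≤ n → ∀ t : ℝ, r n ≤ t → t ≤ r (n + 1) →
      ν t = (t - r n) / (r (n + 1) - r n) + n)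
    (L : ℝ → ℝ) (hL : ∀ s : ℝ, L s = Real.exp (∫ t in (1 : ℝ)..s, ν t / t)) :
    ∀ ε : ℝ, 0 < ε → ε < 1 → ∀ n : ℕ, n₀ ≤ n → r n ≤ ε * r (n + 1) →
      L (ε * r (n + 1)) ≤ ε ^ n * L (r (n + 1)) ∧ L (r (n + 1)) = r (n + 2) := by
  intro ε hε0 hε1 n hn hrε
  refine ⟨?_, by rw [hL, hrec (n + 1) (by omega)]⟩
  have key {k : ℕ} (hk : n₀ ≤ k) :=
    drasinSastry_le_r_and_monotoneOn (by omega) (by linarith) hν₀ hrn₀ hrec hνlin hk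
  obtain ⟨hRb, hmono⟩ := key (Nat.le_succ_of_le hn)
  set b := r (n + 1)
  have ha1 : 1 ≤ ε * b := by linarith [(key hn).1]
  have hab : ε * b ≤ b := mul_le_of_le_one_left (by linarith) hε1.le
  have hεb : ε * b ∈ uIcc 1 b := mem_uIcc_of_le ha1 hab
  have hint := hmono.intervalIntegrable_of_le zero_le_one (by linarith)
  have hν_ge : ∀ t ∈ Icc (ε * b) b, (n : ℝ) ≤ ν t := fun t ht => by
    rw [hνlin n hn t (hrε.trans ht.1) ht.2]
    have : 0 ≤ (t - r n) / (b - r n) := div_nonneg (by linarith [ht.1]) (by linarith [ht.2])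
    linarith
  have hgrowth : 1 ≤ ε ^ n * exp (∫ t in (ε * b)..b, ν t / t) := by
    have := pow_div_le_exp_integral_div_id (by linarith) hab
      (hint.mono_set (uIcc_subset_uIcc hεb right_mem_uIcc)) hν_ge
    rwa [div_mul_cancel_right₀ (by linarith), inv_pow,
      inv_le_iff_one_le_mul₀ (by positivity), mul_comm] at this
  have hint' : IntervalIntegrable (fun t => ν t / t) volume 1 b :=
    hint.div_id (notMem_uIcc_of_lt one_pos (by linarith))
  rw [hL, hL, ← intervalIntegral.integral_add_adjacent_intervals
    (hint'.mono_set (uIcc_subset_uIcc left_mem_uIcc hεb))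
    (hint'.mono_set (uIcc_subset_uIcc hεb right_mem_uIcc)), exp_add, mul_left_comm]
  exact le_mul_of_one_le_right (exp_pos _).le hgrowth
end

section
/- In the Drasin–Sastry parameter construction, for every n ≥ n₀ with 2 r_n ≤ r_{n+1} one has L(2 r_n) ≤ (2 r_n)^{n+1}. -/
open Filter

/-- In the Drasin–Sastry parameter construction, for every `n ≥ n₀` with `2 r_n ≤ r_{n+1}` one has `L (2 r_n) ≤ (2 r_n)^{n+1}`. -/
theorem drasinSastry_L_two_rn_upper (n₀ : ℕ) (hn₀ : 2 ≤ n₀) (R' : ℝ) (hR' : 4 < R')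
    (ν : ℝ → ℝ) (r : ℕ → ℝ)
    (hν₀ : ∀ t : ℝ, 0 ≤ t → t ≤ R' → ν t = n₀)
    (hrn₀ : r n₀ = R')
    (hrec : ∀ n : ℕ, n₀ ≤ n → r (n + 1) = Real.exp (∫ t in (1 : ℝ)..(r n), ν t / t))
    (hνlin : ∀ n : ℕ, n₀ ≤ n → ∀ t : ℝ, r n ≤ t → t ≤ r (n + 1) →
      ν t = (t - r n) / (r (n + 1) - r n) + n)
    (L : ℝ → ℝ) (hL : ∀ s : ℝ, L s = Real.exp (∫ t in (1 : ℝ)..s, ν t / t)) :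
    ∀ n : ℕ, n₀ ≤ n → 2 * r n ≤ r (n + 1) → L (2 * r n) ≤ (2 * r n) ^ (n + 1) := by
  have hR1 : (1:ℝ) < R' := by linarith
  -- integrability of 1/t type functions
  have hinv : ∀ a b : ℝ, 1 ≤ a → a ≤ b → ∀ c : ℝ,
      IntervalIntegrable (fun t => c / t) MeasureTheory.volume a b := by
    intro a b ha hab c
    apply ContinuousOn.intervalIntegrable
    apply ContinuousOn.div continuousOn_const continuousOn_id
    intro x hx
    rw [Set.uIcc_of_le hab] at hx
    have : (1:ℝ) ≤ x := le_trans ha hx.1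
    positivity
  have hinvval : ∀ b : ℝ, 1 ≤ b → ∀ c : ℝ,
      (∫ t in (1:ℝ)..b, c / t) = c * Real.log b := by
    intro b hb c
    have h0 : (0:ℝ) ∉ Set.uIcc (1:ℝ) b := by
      rw [Set.uIcc_of_le hb]
      intro h
      exact absurd h.1 (by norm_num)
    simp_rw [div_eq_mul_inv, ← one_div]
    rw [intervalIntegral.integral_const_mul, integral_one_div h0, div_one]
  -- the main induction
  have key : ∀ m : ℕ, n₀ ≤ m → R' ≤ r m ∧
      IntervalIntegrable (fun t => ν t / t) MeasureTheory.volume 1 (r m) ∧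
      (∀ t ∈ Set.Icc (1:ℝ) (r m), 2 ≤ ν t ∧ ν t ≤ (m:ℝ)) := by
    intro m hm
    induction m, hm using Nat.le_induction with
    | base =>
      refine ⟨hrn₀.ge, ?_, ?_⟩
      · rw [hrn₀]
        apply ContinuousOn.intervalIntegrable
        rw [Set.uIcc_of_le hR1.le]
        apply ContinuousOn.congr (f := fun t => (n₀:ℝ) / t)
        · apply ContinuousOn.div continuousOn_const continuousOn_id
          intro x hx
          have : (1:ℝ) ≤ x := hx.1
          positivity
        · intro x hx
          simp only
          rw [hν₀ x (by linarith [hx.1]) hx.2]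
      · intro t ht
        rw [hrn₀] at ht
        rw [hν₀ t (by linarith [ht.1]) ht.2]
        constructor
        · exact_mod_cast hn₀
        · exact le_refl _
    | succ m hm ih =>
      obtain ⟨hR, hint, hb⟩ := ih
      have hRm : (1:ℝ) < r m := lt_of_lt_of_le hR1 hR
      have hrmpos : (0:ℝ) < r m := by linarith
      -- monotonicity r m ≤ r (m+1)
      have hmono : r m ≤ r (m+1) := by
        rw [hrec m hm]
        have h1 : Real.log (r m) ≤ ∫ t in (1:ℝ)..(r m), ν t / t := by
          have hle : (∫ t in (1:ℝ)..(r m), (1:ℝ) / t) ≤ ∫ t in (1:ℝ)..(r m), ν t / t := by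
            apply intervalIntegral.integral_mono_on hRm.le (hinv 1 (r m) le_rfl hRm.le 1) hint
            intro x hx
            have hx0 : (0:ℝ) < x := lt_of_lt_of_le one_pos hx.1
            have := (hb x hx).1
            gcongr
            linarith
          rw [hinvval (r m) hRm.le 1, one_mul] at hle
          exact hle
        calc r m = Real.exp (Real.log (r m)) := (Real.exp_log hrmpos).symm
          _ ≤ _ := Real.exp_le_exp.mpr h1
      refine ⟨le_trans hR hmono, ?_, ?_⟩
      · rcases eq_or_lt_of_le hmono with heq | hlt
        · rw [← heq]; exact hint
        · refine hint.trans ?_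
          apply ContinuousOn.intervalIntegrable
          rw [Set.uIcc_of_le hmono]
          apply ContinuousOn.congr
            (f := fun t => ((t - r m) / (r (m+1) - r m) + (m:ℝ)) / t)
          · apply ContinuousOn.div
              (Continuous.continuousOn
                (((continuous_id.sub continuous_const).div_const _).add continuous_const))
              continuousOn_id
            intro x hx
            exact ne_of_gt (lt_of_lt_of_le hrmpos hx.1)
          · intro x hx
            simp only
            rw [hνlin m hm x hx.1 hx.2]
      · intro t ht
        rcases le_or_gt t (r m) with h | h
        · have := hb t ⟨ht.1, h⟩
          refine ⟨this.1, le_trans this.2 (by push_cast; linarith)⟩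
        · rw [hνlin m hm t h.le ht.2]
          have hnum : 0 ≤ t - r m := by linarith
          have hden : 0 ≤ r (m+1) - r m := by linarith
          constructor
          · have : 0 ≤ (t - r m) / (r (m+1) - r m) := div_nonneg hnum hden
            have h2m : (2:ℝ) ≤ (m:ℝ) := by
              have : 2 ≤ m := le_trans hn₀ hm
              exact_mod_cast this
            linarith
          · push_cast
            have : (t - r m) / (r (m+1) - r m) ≤ 1 := by
              rcases eq_or_lt_of_le hmono with heq | hlt
              · have : t ≤ r m := by rw [heq]; exact ht.2
                linarith
              · rw [div_le_one (by linarith)]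
                linarith [ht.2]
            linarith
  -- the final computation
  intro n hn h2
  obtain ⟨hR, hint, hb⟩ := key n hn
  have hRn : (1:ℝ) < r n := lt_of_lt_of_le hR1 hR
  have hpos : (0:ℝ) < r n := by linarith
  have h2pos : (0:ℝ) < 2 * r n := by linarith
  have hlt : r n < 2 * r n := by linarith
  have hd : 0 < r (n+1) - r n := by linarith
  -- integrability on [r n, 2 r n]
  have hint2 : IntervalIntegrable (fun t => ν t / t) MeasureTheory.volume (r n) (2 * r n) := by
    apply ContinuousOn.intervalIntegrable
    rw [Set.uIcc_of_le hlt.le]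
    apply ContinuousOn.congr
      (f := fun t => ((t - r n) / (r (n+1) - r n) + (n:ℝ)) / t)
    · apply ContinuousOn.div
        (Continuous.continuousOn
          (((continuous_id.sub continuous_const).div_const _).add continuous_const))
        continuousOn_id
      intro x hx
      exact ne_of_gt (lt_of_lt_of_le hpos hx.1)
    · intro x hx
      simp only
      rw [hνlin n hn x hx.1 (le_trans hx.2 h2)]
  -- bound on the first integral
  have hA : (∫ t in (1:ℝ)..(r n), ν t / t) ≤ (n:ℝ) * Real.log (r n) := by
    rw [← hinvval (r n) hRn.le (n:ℝ)]
    apply intervalIntegral.integral_mono_on hRn.le hint (hinv 1 (r n) le_rfl hRn.le _)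
    intro x hx
    have hx0 : (0:ℝ) < x := lt_of_lt_of_le one_pos hx.1
    have := (hb x hx).2
    gcongr
  -- bound on the second integral
  have hB : (∫ t in (r n)..(2 * r n), ν t / t) ≤ ((n:ℝ) + 1) * Real.log 2 := by
    have hval : (∫ t in (r n)..(2 * r n), ((n:ℝ)+1) / t) = ((n:ℝ)+1) * Real.log 2 := by
      have h0 : (0:ℝ) ∉ Set.uIcc (r n) (2 * r n) := by
        rw [Set.uIcc_of_le hlt.le]
        intro h
        linarith [h.1]
      simp_rw [div_eq_mul_inv, ← one_div]
      rw [intervalIntegral.integral_const_mul, integral_one_div h0]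
      congr 1
      rw [mul_div_assoc, div_self (ne_of_gt hpos), mul_one]
    rw [← hval]
    apply intervalIntegral.integral_mono_on hlt.le hint2
      (hinv (r n) (2 * r n) hRn.le hlt.le _)
    intro x hx
    have hx0 : (0:ℝ) < x := lt_of_lt_of_le hpos hx.1
    have hbd : ν x ≤ (n:ℝ) + 1 := by
      rw [hνlin n hn x hx.1 (le_trans hx.2 h2)]
      have : (x - r n) / (r (n+1) - r n) ≤ 1 := by
        rw [div_le_one hd]
        linarith [hx.2, h2]
      linarith
    gcongr
  -- put everything together
  rw [hL]
  have hsplit : (∫ t in (1:ℝ)..(2 * r n), ν t / t)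
      = (∫ t in (1:ℝ)..(r n), ν t / t) + ∫ t in (r n)..(2 * r n), ν t / t :=
    (intervalIntegral.integral_add_adjacent_intervals hint hint2).symm
  have hlog0 : 0 ≤ Real.log (r n) := Real.log_nonneg hRn.le
  have hfin : (∫ t in (1:ℝ)..(2 * r n), ν t / t) ≤ ((n:ℝ)+1) * Real.log (2 * r n) := by
    rw [hsplit, Real.log_mul (by norm_num) (ne_of_gt hpos)]
    nlinarith [hA, hB, hlog0]
  calc Real.exp (∫ t in (1:ℝ)..(2 * r n), ν t / t)
      ≤ Real.exp (((n:ℝ)+1) * Real.log (2 * r n)) := Real.exp_le_exp.mpr hfin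
    _ = (2 * r n) ^ (n + 1) := by
        rw [show ((n:ℝ)+1) = ((n+1 : ℕ) : ℝ) by push_cast; ring,
          Real.exp_nat_mul, Real.exp_log h2pos]
end

section
/- In the Drasin–Sastry parameter construction, log r_{n₀+n} ≥ n₀^n · log r_{n₀} for every integer n ≥ 0. -/
open Filter

/-- In the Drasin–Sastry parameter construction, `log r_{n₀+n} ≥ n₀^n · log r_{n₀}` for every integer `n ≥ 0`. -/
theorem drasinSastry_log_rn_growth (n₀ : ℕ) (hn₀ : 2 ≤ n₀) (R' : ℝ) (hR' : 4 < R')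
    (ν : ℝ → ℝ) (r : ℕ → ℝ)
    (hν₀ : ∀ t : ℝ, 0 ≤ t → t ≤ R' → ν t = n₀)
    (hrn₀ : r n₀ = R')
    (hrec : ∀ n : ℕ, n₀ ≤ n → r (n + 1) = Real.exp (∫ t in (1 : ℝ)..(r n), ν t / t))
    (hνlin : ∀ n : ℕ, n₀ ≤ n → ∀ t : ℝ, r n ≤ t → t ≤ r (n + 1) →
      ν t = (t - r n) / (r (n + 1) - r n) + n) :
    ∀ n : ℕ, (n₀ : ℝ) ^ n * Real.log (r n₀) ≤ Real.log (r (n₀ + n)) := by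
  have hR'1 : (1:ℝ) < R' := by linarith
  have hlogR' : 0 < Real.log R' := Real.log_pos hR'1
  have hn₀R : (2:ℝ) ≤ (n₀:ℝ) := by exact_mod_cast hn₀
  have key : ∀ j : ℕ, R' ≤ r (n₀ + j)
      ∧ (∀ t ∈ Set.Icc (1:ℝ) (r (n₀ + j)), (n₀:ℝ) ≤ ν t ∧ ν t ≤ (n₀:ℝ) + j)
      ∧ MonotoneOn ν (Set.Icc (1:ℝ) (r (n₀ + j)))
      ∧ (n₀:ℝ) ^ j * Real.log R' ≤ Real.log (r (n₀ + j)) := by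
    intro j
    induction j with
    | zero =>
      refine ⟨by simp [hrn₀], ?_, ?_, by simp [hrn₀]⟩
      · intro t ht
        simp only [Nat.add_zero, hrn₀] at ht
        rw [hν₀ t (by linarith [ht.1]) ht.2]
        simp
      · intro s hs t ht _
        simp only [Nat.add_zero, hrn₀] at hs ht
        rw [hν₀ s (by linarith [hs.1]) hs.2, hν₀ t (by linarith [ht.1]) ht.2]
    | succ j ih =>
      obtain ⟨ha, hb, hc, hd⟩ := ih
      set m := n₀ + j with hm_def
      have hm : n₀ ≤ m := Nat.le_add_right _ _
      have hrm1 : (1:ℝ) < r m := lt_of_lt_of_le hR'1 ha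
      have hrm0 : (0:ℝ) < r m := by linarith
      have hlogrm : 0 < Real.log (r m) := Real.log_pos hrm1
      -- integrability of ν/t on [1, r m]
      have hmono' : MonotoneOn ν (Set.uIcc 1 (r m)) := by
        rw [Set.uIcc_of_le hrm1.le]; exact hc
      have hint1 : IntervalIntegrable ν MeasureTheory.volume 1 (r m) :=
        hmono'.intervalIntegrable
      have hcont : ContinuousOn (fun t : ℝ => t⁻¹) (Set.uIcc 1 (r m)) := by
        apply ContinuousOn.inv₀ continuousOn_id
        intro t ht
        rw [Set.uIcc_of_le hrm1.le] at ht
        have := ht.1; positivity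
      have hint : IntervalIntegrable (fun t => ν t / t) MeasureTheory.volume 1 (r m) := by
        simpa [div_eq_mul_inv] using hint1.mul_continuousOn hcont
      have hcontc : ContinuousOn (fun t : ℝ => (n₀:ℝ) / t) (Set.uIcc 1 (r m)) := by
        apply ContinuousOn.div continuousOn_const continuousOn_id
        intro t ht
        rw [Set.uIcc_of_le hrm1.le] at ht
        have := ht.1; positivity
      have hintc : IntervalIntegrable (fun t => (n₀:ℝ) / t) MeasureTheory.volume 1 (r m) :=
        hcontc.intervalIntegrable
      have h0 : (0:ℝ) ∉ Set.uIcc (1:ℝ) (r m) := by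
        rw [Set.uIcc_of_le hrm1.le]
        intro h
        have := h.1; linarith
      have hval : (∫ t in (1:ℝ)..(r m), (n₀:ℝ) / t) = (n₀:ℝ) * Real.log (r m) := by
        calc (∫ t in (1:ℝ)..(r m), (n₀:ℝ) / t)
            = (n₀:ℝ) * ∫ t in (1:ℝ)..(r m), t⁻¹ := by
              simp [div_eq_mul_inv, intervalIntegral.integral_const_mul]
          _ = (n₀:ℝ) * Real.log (r m) := by rw [integral_inv h0]; simp
      have hmonoI : (∫ t in (1:ℝ)..(r m), (n₀:ℝ) / t) ≤ ∫ t in (1:ℝ)..(r m), ν t / t := by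
        apply intervalIntegral.integral_mono_on hrm1.le hintc hint
        intro t ht
        have ht0 : 0 < t := by linarith [ht.1]
        have := (hb t ht).1
        gcongr
      have hlog1 : Real.log (r (m+1)) = ∫ t in (1:ℝ)..(r m), ν t / t := by
        rw [hrec m hm, Real.log_exp]
      have hstep : (n₀:ℝ) * Real.log (r m) ≤ Real.log (r (m+1)) := by
        rw [hlog1, ← hval]; exact hmonoI
      have hrm1pos : 0 < r (m+1) := by rw [hrec m hm]; exact Real.exp_pos _
      have hloglt : Real.log (r m) < Real.log (r (m+1)) := by nlinarith
      have hrlt : r m < r (m+1) := by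
        calc r m = Real.exp (Real.log (r m)) := (Real.exp_log hrm0).symm
          _ < Real.exp (Real.log (r (m+1))) := Real.exp_lt_exp.2 hloglt
          _ = r (m+1) := Real.exp_log hrm1pos
      have hlogR'le : Real.log R' ≤ Real.log (r m) := by
        gcongr <;> linarith
      have hd' : (n₀:ℝ) ^ (j+1) * Real.log R' ≤ Real.log (r (m+1)) := by
        have h1 : (n₀:ℝ) ^ (j+1) * Real.log R' = (n₀:ℝ) * ((n₀:ℝ) ^ j * Real.log R') := by ring
        have h2 : (n₀:ℝ) * ((n₀:ℝ) ^ j * Real.log R') ≤ (n₀:ℝ) * Real.log (r m) :=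
          mul_le_mul_of_nonneg_left hd (by positivity)
        linarith
      have ha' : R' ≤ r (m+1) := by
        have hlR : Real.log R' ≤ Real.log (r (m+1)) := by nlinarith
        calc R' = Real.exp (Real.log R') := (Real.exp_log (by linarith)).symm
          _ ≤ Real.exp (Real.log (r (m+1))) := Real.exp_le_exp.2 hlR
          _ = r (m+1) := Real.exp_log hrm1pos
      have hdpos : 0 < r (m+1) - r m := by linarith
      have hb' : ∀ t ∈ Set.Icc (1:ℝ) (r (m+1)), (n₀:ℝ) ≤ ν t ∧ ν t ≤ (n₀:ℝ) + (j+1 : ℕ) := by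
        intro t ht
        rcases le_total t (r m) with h | h
        · obtain ⟨h1, h2⟩ := hb t ⟨ht.1, h⟩
          constructor
          · exact h1
          · push_cast; push_cast at h2; linarith
        · rw [hνlin m hm t h ht.2]
          have hf1 : 0 ≤ (t - r m) / (r (m+1) - r m) := div_nonneg (by linarith) hdpos.le
          have hf2 : (t - r m) / (r (m+1) - r m) ≤ 1 := by
            rw [div_le_one hdpos]; linarith [ht.2]
          have hmc : ((m:ℕ):ℝ) = (n₀:ℝ) + j := by push_cast [hm_def]; ring
          rw [hmc]
          constructor <;> push_cast <;> [linarith; linarith]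
      have hc' : MonotoneOn ν (Set.Icc (1:ℝ) (r (m+1))) := by
        intro s hs t ht hst
        rcases le_total t (r m) with h1 | h1
        · exact hc ⟨hs.1, hst.trans h1⟩ ⟨ht.1, h1⟩ hst
        · have hνt : ((m:ℕ):ℝ) ≤ ν t := by
            rw [hνlin m hm t h1 ht.2]
            have := div_nonneg (sub_nonneg.2 h1) hdpos.le
            linarith
          rcases le_total s (r m) with h2 | h2
          · have hνs := (hb s ⟨hs.1, h2⟩).2
            have hmc : ((m:ℕ):ℝ) = (n₀:ℝ) + j := by push_cast [hm_def]; ring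
            rw [hmc] at hνt
            linarith
          · rw [hνlin m hm s h2 (hst.trans ht.2), hνlin m hm t h1 ht.2]
            gcongr
      exact ⟨ha', hb', hc', hd'⟩
  intro n
  rw [hrn₀]
  exact (key n).2.2.2
end

section
/- In the Drasin–Sastry parameter construction, for every constant C ≥ 1 one has liminf_{n→∞} [log log (C · L(2 r_n))] / [log log (2 r_n)] ≤ 1. -/
/-!
Because `ν ≥ n₀ ≥ 2`, `log r (n + 1) = ∫₁^{r n} ν t / t dt ≥ 2 log r n`, so `log r n` at least
doubles at each step and `log log (2 r n) ≥ (n - n₀) log 2`. On the other hand `ν` is monotone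
with `ν (r (n + 1)) = n + 1`, and `2 r n ≤ r n ^ 2 ≤ r (n + 1)`, so `ν ≤ n + 1` on `[0, 2 r n]`
and `log L (2 r n) ≤ (n + 1) log (2 r n)`. Taking logarithms once more, the ratio is at most
`1 + log (log C + n + 1) / ((n - n₀) log 2)`, which tends to `1`.
-/

open Filter Set Real Asymptotics Topology MeasureTheory

lemma integral_const_div_eq_mul_log (c : ℝ) {b : ℝ} (hb : 0 < b) :
    ∫ t in (1 : ℝ)..b, c / t = c * log b := by
  have h0 : (0 : ℝ) ∉ uIcc 1 b := by simp [mem_uIcc, not_le.2 hb]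
  simp_rw [div_eq_mul_inv]
  rw [intervalIntegral.integral_const_mul, integral_inv h0, div_one]

lemma IntervalIntegrable.div_id_of_one_le {f : ℝ → ℝ} {b : ℝ} (hb : 1 ≤ b)
    (hf : IntervalIntegrable f volume 1 b) : IntervalIntegrable (fun t => f t / t) volume 1 b := by
  simp_rw [div_eq_mul_inv]
  refine hf.mul_continuousOn (continuousOn_inv₀.mono fun t ht => ?_)
  rw [uIcc_of_le hb] at ht
  exact (zero_lt_one.trans_le ht.1).ne'

lemma integral_div_id_le_mul_log {f : ℝ → ℝ} {b c : ℝ} (hb : 1 ≤ b)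
    (hf : IntervalIntegrable f volume 1 b) (hfc : ∀ t ∈ Icc 1 b, f t ≤ c) :
    ∫ t in (1 : ℝ)..b, f t / t ≤ c * log b := by
  rw [← integral_const_div_eq_mul_log c (by linarith)]
  refine intervalIntegral.integral_mono_on hb (hf.div_id_of_one_le hb)
    (intervalIntegrable_const.div_id_of_one_le hb) fun t ht => ?_
  exact div_le_div_of_nonneg_right (hfc t ht) (by linarith [ht.1])

lemma mul_log_le_integral_div_id {f : ℝ → ℝ} {b c : ℝ} (hb : 1 ≤ b)
    (hf : IntervalIntegrable f volume 1 b) (hcf : ∀ t ∈ Icc 1 b, c ≤ f t) :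
    c * log b ≤ ∫ t in (1 : ℝ)..b, f t / t := by
  rw [← integral_const_div_eq_mul_log c (by linarith)]
  refine intervalIntegral.integral_mono_on hb (intervalIntegrable_const.div_id_of_one_le hb)
    (hf.div_id_of_one_le hb) fun t ht => ?_
  exact div_le_div_of_nonneg_right (hcf t ht) (by linarith [ht.1])

lemma MonotoneOn.intervalIntegrable_one {f : ℝ → ℝ} {b : ℝ} (hb : 1 ≤ b)
    (hf : MonotoneOn f (Icc 0 b)) : IntervalIntegrable f volume 1 b :=
  (hf.mono (by rw [uIcc_of_le hb]; exact Icc_subset_Icc zero_le_one le_rfl)).intervalIntegrable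

lemma log_div_log_le_one_add {X D K m : ℝ} (hX : 0 < X) (hXD : X ≤ K * D) (hK : 1 ≤ K)
    (hm : 0 < m) (hmD : m ≤ log D) : log X / log D ≤ 1 + log K / m := by
  have hD : 0 < D := pos_of_mul_pos_right (hX.trans_le hXD) (by linarith)
  have hlogD : 0 < log D := hm.trans_le hmD
  have hlogX : log X ≤ log K + log D := by
    rw [← log_mul (by linarith) hD.ne']
    exact log_le_log hX hXD
  calc log X / log D ≤ (log K + log D) / log D := by gcongr
    _ = 1 + log K / log D := by field_simp; ring
    _ ≤ 1 + log K / m := by gcongr; exact log_nonneg hK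

lemma tendsto_log_add_div_sub_atTop (a b : ℝ) :
    Tendsto (fun x => log (x + a) / (x - b)) atTop (𝓝 0) := by
  have hlog : (fun x => log (x + a)) =o[atTop] (fun x => x + a) :=
    isLittleO_log_id_atTop.comp_tendsto (tendsto_atTop_add_const_right _ a tendsto_id)
  have hid : Tendsto (norm ∘ id) atTop atTop := tendsto_norm_atTop_atTop
  have ha : (fun x : ℝ => x + a) ~[atTop] id :=
    IsEquivalent.refl.add_const_of_norm_tendsto_atTop hid
  have hb : (fun x : ℝ => x - b) ~[atTop] id := by
    simpa only [id, sub_eq_add_neg] using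
      IsEquivalent.refl.add_const_of_norm_tendsto_atTop (c := -b) hid
  exact (hlog.trans_isBigO (ha.trans hb.symm).isBigO).tendsto_div_nhds_zero

structure DrasinSastryParams (n₀ : ℕ) (R' : ℝ) (ν : ℝ → ℝ) (r : ℕ → ℝ) : Prop where
  two_le : 2 ≤ n₀
  four_lt : 4 < R'
  nu_of_le : ∀ t : ℝ, 0 ≤ t → t ≤ R' → ν t = n₀
  r_start : r n₀ = R'
  r_succ : ∀ n : ℕ, n₀ ≤ n → r (n + 1) = exp (∫ t in (1 : ℝ)..(r n), ν t / t)
  nu_eq : ∀ n : ℕ, n₀ ≤ n → ∀ t : ℝ, r n ≤ t → t ≤ r (n + 1) →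
    ν t = (t - r n) / (r (n + 1) - r n) + n

namespace DrasinSastryParams

variable {n₀ : ℕ} {R' : ℝ} {ν : ℝ → ℝ} {r : ℕ → ℝ} {n : ℕ} {b : ℝ}

lemma nu_zero (h : DrasinSastryParams n₀ R' ν r) : ν 0 = n₀ :=
  h.nu_of_le 0 le_rfl (by linarith [h.four_lt])

lemma one_lt_log_R' (h : DrasinSastryParams n₀ R' ν r) : 1 < log R' :=
  (lt_log_iff_exp_lt (by linarith [h.four_lt])).2 (by linarith [exp_one_lt_d9, h.four_lt])

lemma mul_log_le_integral (h : DrasinSastryParams n₀ R' ν r) (hb : 1 ≤ b)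
    (hmono : MonotoneOn ν (Icc 0 b)) : n₀ * log b ≤ ∫ t in (1 : ℝ)..b, ν t / t :=
  mul_log_le_integral_div_id hb (hmono.intervalIntegrable_one hb) fun t ht =>
    h.nu_zero ▸ hmono ⟨le_rfl, by linarith⟩ ⟨by linarith [ht.1], ht.2⟩ (by linarith [ht.1])

lemma sq_le_r_succ_of_monotoneOn (h : DrasinSastryParams n₀ R' ν r) (hn : n₀ ≤ n)
    (hR : R' ≤ r n) (hmono : MonotoneOn ν (Icc 0 (r n))) : r n ^ 2 ≤ r (n + 1) := by
  have hr : 1 ≤ r n := by linarith [h.four_lt]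
  have hn₀ : (2 : ℝ) ≤ n₀ := by exact_mod_cast h.two_le
  calc r n ^ 2 = exp (2 * log (r n)) := by
        rw [← exp_log (by positivity : 0 < r n ^ 2), log_pow, Nat.cast_ofNat]
    _ ≤ exp (n₀ * log (r n)) := by gcongr; exact log_nonneg hr
    _ ≤ r (n + 1) := h.r_succ n hn ▸ exp_le_exp.2 (h.mul_log_le_integral hr hmono)

lemma monotoneOn_succ (h : DrasinSastryParams n₀ R' ν r) (hn : n₀ ≤ n) (hR : R' ≤ r n)
    (hmono : MonotoneOn ν (Icc 0 (r n))) : MonotoneOn ν (Icc 0 (r (n + 1))) := by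
  have hlt : r n < r (n + 1) := by
    nlinarith [h.sq_le_r_succ_of_monotoneOn hn hR hmono, h.four_lt]
  have hpiece : MonotoneOn ν (Icc (r n) (r (n + 1))) := by
    refine MonotoneOn.congr (f₁ := fun t => (t - r n) / (r (n + 1) - r n) + n) ?_
      fun t ht => (h.nu_eq n hn t ht.1 ht.2).symm
    intro x _ y _ hxy
    have : 0 < r (n + 1) - r n := sub_pos.2 hlt
    dsimp only
    gcongr
  rw [← Icc_union_Icc_eq_Icc (by linarith [h.four_lt]) hlt.le]
  exact hmono.union_right hpiece (isGreatest_Icc (by linarith [h.four_lt])) (isLeast_Icc hlt.le)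

lemma le_r_and_monotoneOn (h : DrasinSastryParams n₀ R' ν r) (hn : n₀ ≤ n) :
    R' ≤ r n ∧ MonotoneOn ν (Icc 0 (r n)) := by
  induction n, hn using Nat.le_induction with
  | base =>
    refine ⟨h.r_start.ge, fun x hx y hy _ => ?_⟩
    rw [h.r_start] at hx hy
    rw [h.nu_of_le x hx.1 hx.2, h.nu_of_le y hy.1 hy.2]
  | succ n hn ih =>
    have hsq := h.sq_le_r_succ_of_monotoneOn hn ih.1 ih.2
    exact ⟨by nlinarith [h.four_lt], h.monotoneOn_succ hn ih.1 ih.2⟩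

lemma le_r (h : DrasinSastryParams n₀ R' ν r) (hn : n₀ ≤ n) : R' ≤ r n :=
  (h.le_r_and_monotoneOn hn).1

lemma monotoneOn (h : DrasinSastryParams n₀ R' ν r) (hn : n₀ ≤ n) :
    MonotoneOn ν (Icc 0 (r n)) :=
  (h.le_r_and_monotoneOn hn).2

lemma four_lt_r (h : DrasinSastryParams n₀ R' ν r) (hn : n₀ ≤ n) : 4 < r n :=
  h.four_lt.trans_le (h.le_r hn)

lemma sq_le_r_succ (h : DrasinSastryParams n₀ R' ν r) (hn : n₀ ≤ n) : r n ^ 2 ≤ r (n + 1) :=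
  h.sq_le_r_succ_of_monotoneOn hn (h.le_r hn) (h.monotoneOn hn)

lemma two_mul_r_le_r_succ (h : DrasinSastryParams n₀ R' ν r) (hn : n₀ ≤ n) :
    2 * r n ≤ r (n + 1) := by
  nlinarith [h.sq_le_r_succ hn, h.four_lt_r hn]

lemma nu_r (h : DrasinSastryParams n₀ R' ν r) (hn : n₀ ≤ n) : ν (r n) = n := by
  have := h.nu_eq n hn (r n) le_rfl (by linarith [h.two_mul_r_le_r_succ hn, h.four_lt_r hn])
  simpa using this

lemma nu_le (h : DrasinSastryParams n₀ R' ν r) (hn : n₀ ≤ n) {t : ℝ} (ht : t ∈ Icc 0 (r n)) :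
    ν t ≤ n :=
  h.nu_r hn ▸ h.monotoneOn hn ht ⟨ht.1.trans ht.2, le_rfl⟩ ht.2

lemma integral_le_mul_log (h : DrasinSastryParams n₀ R' ν r) (hn : n₀ ≤ n) (hb : 1 ≤ b)
    (hbr : b ≤ r n) : ∫ t in (1 : ℝ)..b, ν t / t ≤ n * log b :=
  integral_div_id_le_mul_log hb
    (((h.monotoneOn hn).mono (Icc_subset_Icc le_rfl hbr)).intervalIntegrable_one hb)
    fun t ht => h.nu_le hn ⟨by linarith [ht.1], ht.2.trans hbr⟩

lemma two_pow_mul_log_le_log_r (h : DrasinSastryParams n₀ R' ν r) (hn : n₀ ≤ n) :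
    2 ^ (n - n₀) * log R' ≤ log (r n) := by
  induction n, hn using Nat.le_induction with
  | base => simp [h.r_start]
  | succ n hn ih =>
    have hdouble : 2 * log (r n) ≤ log (r (n + 1)) := by
      rw [← Nat.cast_ofNat, ← log_pow]
      exact log_le_log (by nlinarith [h.four_lt_r hn]) (h.sq_le_r_succ hn)
    rw [Nat.sub_add_comm hn, pow_succ]
    linarith

lemma one_lt_log_two_mul_r (h : DrasinSastryParams n₀ R' ν r) (hn : n₀ ≤ n) :
    1 < log (2 * r n) :=
  h.one_lt_log_R'.trans_le (log_le_log (by linarith [h.four_lt]) (by linarith [h.four_lt_r hn, h.le_r hn]))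

lemma sub_mul_log_two_le_log_log (h : DrasinSastryParams n₀ R' ν r) (hn : n₀ ≤ n) :
    ((n : ℝ) - n₀) * log 2 ≤ log (log (2 * r n)) := by
  have hr : 0 < r n := by linarith [h.four_lt_r hn]
  have hlogR' : 0 < log R' := by linarith [h.one_lt_log_R']
  calc ((n : ℝ) - n₀) * log 2 = log (2 ^ (n - n₀)) := by rw [log_pow, Nat.cast_sub hn]
    _ ≤ log (2 ^ (n - n₀) * log R') :=
        log_le_log (by positivity) (le_mul_of_one_le_right (by positivity) h.one_lt_log_R'.le)
    _ ≤ log (log (2 * r n)) :=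
        log_le_log (by positivity)
          ((h.two_pow_mul_log_le_log_r hn).trans (log_le_log hr (by linarith)))

lemma mul_log_le_integral_two_mul_r (h : DrasinSastryParams n₀ R' ν r) (hn : n₀ ≤ n) :
    n₀ * log (2 * r n) ≤ ∫ t in (1 : ℝ)..2 * r n, ν t / t :=
  h.mul_log_le_integral (by linarith [h.four_lt_r hn]) ((h.monotoneOn (Nat.le_succ_of_le hn)).mono
    (Icc_subset_Icc le_rfl (h.two_mul_r_le_r_succ hn)))

lemma one_le_log_mul_exp_integral (h : DrasinSastryParams n₀ R' ν r) {C : ℝ} (hC : 1 ≤ C)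
    (hn : n₀ ≤ n) : 1 ≤ log (C * exp (∫ t in (1 : ℝ)..2 * r n, ν t / t)) := by
  have hn₀ : (2 : ℝ) ≤ n₀ := by exact_mod_cast h.two_le
  rw [log_mul (by positivity) (exp_pos _).ne', log_exp]
  nlinarith [log_nonneg hC, h.one_lt_log_two_mul_r hn, h.mul_log_le_integral_two_mul_r hn]

lemma log_log_div_log_log_nonneg (h : DrasinSastryParams n₀ R' ν r) {C : ℝ} (hC : 1 ≤ C)
    (hn : n₀ ≤ n) :
    0 ≤ log (log (C * exp (∫ t in (1 : ℝ)..2 * r n, ν t / t))) / log (log (2 * r n)) :=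
  div_nonneg (log_nonneg (h.one_le_log_mul_exp_integral hC hn))
    (log_nonneg (h.one_lt_log_two_mul_r hn).le)

lemma log_log_div_log_log_le (h : DrasinSastryParams n₀ R' ν r) {C : ℝ} (hC : 1 ≤ C)
    (hn : n₀ < n) :
    log (log (C * exp (∫ t in (1 : ℝ)..2 * r n, ν t / t))) / log (log (2 * r n)) ≤
      1 + log (n + (log C + 1)) / (n - n₀) / log 2 := by
  have hX := h.one_le_log_mul_exp_integral hC hn.le
  have hint : ∫ t in (1 : ℝ)..2 * r n, ν t / t ≤ (n + 1) * log (2 * r n) := by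
    exact_mod_cast h.integral_le_mul_log (Nat.le_succ_of_le hn.le)
      (by linarith [h.four_lt_r hn.le]) (h.two_mul_r_le_r_succ hn.le)
  have hXD : log (C * exp (∫ t in (1 : ℝ)..2 * r n, ν t / t)) ≤
      (n + (log C + 1)) * log (2 * r n) := by
    rw [log_mul (by positivity) (exp_pos _).ne', log_exp]
    nlinarith [log_nonneg hC, h.one_lt_log_two_mul_r hn.le]
  have hm : 0 < ((n : ℝ) - n₀) * log 2 :=
    mul_pos (sub_pos.2 (by exact_mod_cast hn)) (log_pos one_lt_two)
  rw [div_div]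
  exact log_div_log_le_one_add (by linarith) hXD (by linarith [log_nonneg hC, n.cast_nonneg (α := ℝ)])
    hm (h.sub_mul_log_two_le_log_log hn.le)

end DrasinSastryParams

/-- In the Drasin–Sastry parameter construction, for every `C ≥ 1` one has `liminf_{n→∞} log log (C · L (2 r_n)) / log log (2 r_n) ≤ 1`. -/
theorem drasinSastry_liminf_le_one (n₀ : ℕ) (hn₀ : 2 ≤ n₀) (R' : ℝ) (hR' : 4 < R')
    (ν : ℝ → ℝ) (r : ℕ → ℝ)
    (hν₀ : ∀ t : ℝ, 0 ≤ t → t ≤ R' → ν t = n₀)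
    (hrn₀ : r n₀ = R')
    (hrec : ∀ n : ℕ, n₀ ≤ n → r (n + 1) = Real.exp (∫ t in (1 : ℝ)..(r n), ν t / t))
    (hνlin : ∀ n : ℕ, n₀ ≤ n → ∀ t : ℝ, r n ≤ t → t ≤ r (n + 1) →
      ν t = (t - r n) / (r (n + 1) - r n) + n)
    (L : ℝ → ℝ) (hL : ∀ s : ℝ, L s = Real.exp (∫ t in (1 : ℝ)..s, ν t / t)) :
    ∀ C : ℝ, 1 ≤ C →
      Filter.liminf
        (fun n : ℕ => Real.log (Real.log (C * L (2 * r n))) / Real.log (Real.log (2 * r n)))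
        atTop ≤ 1 := by
  intro C hC
  have h : DrasinSastryParams n₀ R' ν r := ⟨hn₀, hR', hν₀, hrn₀, hrec, hνlin⟩
  obtain rfl : L = fun s => exp (∫ t in (1 : ℝ)..s, ν t / t) := funext hL
  set g : ℕ → ℝ := fun n => 1 + log (n + (log C + 1)) / (n - n₀) / log 2
  have hg : Tendsto g atTop (𝓝 1) := by
    simpa using tendsto_const_nhds.add (((tendsto_log_add_div_sub_atTop _ _).comp
      tendsto_natCast_atTop_atTop).div_const (log 2))
  calc _ ≤ liminf g atTop :=
        liminf_le_liminf ((eventually_gt_atTop n₀).mono fun n hn => h.log_log_div_log_log_le hC hn)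
          (isBoundedUnder_of_eventually_ge ((eventually_ge_atTop n₀).mono
            fun n hn => h.log_log_div_log_log_nonneg hC hn))
          hg.isBoundedUnder_le.isCobounded_flip
    _ = 1 := hg.liminf_eq
end

section
/- Let d ≥ 2 and consider the Drasin–Sastry parameter construction. Suppose g : ℝ^d → ℝ^d is any map for which there exist constants c, C, R₀ > 0 and ε ∈ (0,1) such that c·L(‖x‖_∞) < ‖g(x)‖_∞ < C·L(‖x‖_∞) whenever ‖x‖_∞ ∈ [R₀, ∞) \ E_ε, where E_ε = ⋃_{m > n₀} [ε r_m, r_m]. Then there exists N₀ ∈ ℕ such that for all n ≥ N₀, g maps the set A_n = {x ∈ ℝ^d : 2 r_n < ‖x‖_∞ < ε r_{n+1}} into A_{n+1}. -/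
/-- The maximum norm `‖x‖_∞ = max {|x₁|, …, |x_d|}` on `ℝ^d`. -/
noncomputable def maxNorm {d : ℕ} (x : EuclideanSpace ℝ (Fin d)) : ℝ :=
  ⨆ i : Fin d, |x i|

/-!
On `[r n, r (n + 1)]` the function `ν` is at least `n`, so there `L` grows at least like the
`n`-th power: `L a * (b / a) ^ n ≤ L b`. As `L (r n) = r (n + 1)`, a radius `s` with
`2 r n < s < ε r (n + 1)` has `L s ≥ 2 ^ n r (n + 1)` and `L s ≤ ε ^ n r (n + 2)`; for large
`n` the factors `2 ^ n` and `ε ^ n` absorb the constants `c` and `C`. Such an `s` also avoids the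
exceptional set `E_ε`, because `r n < s < ε r (n + 1)` and `r` is increasing.
-/

open Real Set Filter MeasureTheory intervalIntegral

namespace DrasinSastry

noncomputable def L (ν : ℝ → ℝ) (s : ℝ) : ℝ :=
  exp (∫ t in (1 : ℝ)..s, ν t / t)

section General

variable {ν : ℝ → ℝ} {a b : ℝ}

lemma mul_log_le_integral_div {m : ℝ} (ha : 0 < a) (hab : a ≤ b)
    (hint : IntervalIntegrable (fun t => ν t / t) volume a b) (hm : ∀ t ∈ Icc a b, m ≤ ν t) :
    m * log (b / a) ≤ ∫ t in a..b, ν t / t := by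
  have hinv : IntervalIntegrable (fun t : ℝ => m * t⁻¹) volume a b :=
    (intervalIntegral.intervalIntegrable_inv (fun t ht => by
      rw [uIcc_of_le hab] at ht; exact (ha.trans_le ht.1).ne') continuousOn_id).const_mul m
  calc m * log (b / a) = ∫ t in a..b, m * t⁻¹ := by
        rw [intervalIntegral.integral_const_mul, integral_inv_of_pos ha (ha.trans_le hab)]
    _ ≤ ∫ t in a..b, ν t / t := integral_mono_on hab hinv hint fun t ht =>
        div_le_div_of_nonneg_right (hm t ht) (ha.trans_le ht.1).le

lemma div_pow_le_exp_integral {m : ℕ} (ha : 0 < a) (hab : a ≤ b)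
    (hint : IntervalIntegrable (fun t => ν t / t) volume a b) (hm : ∀ t ∈ Icc a b, (m : ℝ) ≤ ν t) :
    (b / a) ^ m ≤ exp (∫ t in a..b, ν t / t) := by
  calc (b / a) ^ m = exp (m * log (b / a)) := by
        rw [exp_nat_mul, exp_log (div_pos (ha.trans_le hab) ha)]
    _ ≤ _ := exp_le_exp.2 (mul_log_le_integral_div ha hab hint hm)

lemma L_pos (s : ℝ) : 0 < L ν s := exp_pos _

lemma L_one : L ν 1 = 1 := by simp [L]

lemma L_eq_mul_exp_integral (h1a : IntervalIntegrable (fun t => ν t / t) volume 1 a)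
    (hab : IntervalIntegrable (fun t => ν t / t) volume a b) :
    L ν b = L ν a * exp (∫ t in a..b, ν t / t) := by
  rw [L, L, ← exp_add, integral_add_adjacent_intervals h1a hab]

lemma L_mul_div_pow_le {m : ℕ} (ha : 0 < a) (hab : a ≤ b)
    (h1a : IntervalIntegrable (fun t => ν t / t) volume 1 a)
    (hint : IntervalIntegrable (fun t => ν t / t) volume a b) (hm : ∀ t ∈ Icc a b, (m : ℝ) ≤ ν t) :
    L ν a * (b / a) ^ m ≤ L ν b := by
  rw [L_eq_mul_exp_integral h1a hint]
  exact mul_le_mul_of_nonneg_left (div_pow_le_exp_integral ha hab hint hm) (exp_pos _).le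

lemma sq_le_L (hb : 1 ≤ b) (hint : IntervalIntegrable (fun t => ν t / t) volume 1 b)
    (hν : ∀ t ∈ Icc 1 b, 2 ≤ ν t) : b ^ 2 ≤ L ν b := by
  simpa [L_one] using L_mul_div_pow_le (m := 2) one_pos hb (by simp) hint (by exact_mod_cast hν)

end General

structure IsParameters (n₀ : ℕ) (R' : ℝ) (ν : ℝ → ℝ) (r : ℕ → ℝ) : Prop where
  two_le : 2 ≤ n₀
  four_lt : 4 < R'
  nu_base : ∀ t : ℝ, 0 ≤ t → t ≤ R' → ν t = n₀
  r_base : r n₀ = R'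
  r_succ : ∀ n : ℕ, n₀ ≤ n → r (n + 1) = L ν (r n)
  nu_affine : ∀ n : ℕ, n₀ ≤ n → ∀ t : ℝ, r n ≤ t → t ≤ r (n + 1) →
    ν t = (t - r n) / (r (n + 1) - r n) + n

namespace IsParameters

variable {n₀ n : ℕ} {R' : ℝ} {ν : ℝ → ℝ} {r : ℕ → ℝ} (hP : IsParameters n₀ R' ν r)
include hP

lemma le_nu_of_mem_Icc (hn : n₀ ≤ n) {t : ℝ} (ht : t ∈ Icc (r n) (r (n + 1))) : (n : ℝ) ≤ ν t := by
  rw [hP.nu_affine n hn t ht.1 ht.2, le_add_iff_nonneg_left]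
  exact div_nonneg (sub_nonneg.2 ht.1) (sub_nonneg.2 (ht.1.trans ht.2))

lemma intervalIntegrable_r_r_succ (hn : n₀ ≤ n) (h0 : 0 < r n) (hle : r n ≤ r (n + 1)) :
    IntervalIntegrable (fun t => ν t / t) volume (r n) (r (n + 1)) := by
  have hcont : ContinuousOn (fun t => ((t - r n) / (r (n + 1) - r n) + n) / t)
      (uIcc (r n) (r (n + 1))) := by
    rw [uIcc_of_le hle]
    exact (by fun_prop : Continuous fun t : ℝ => (t - r n) / (r (n + 1) - r n) + n).continuousOn.div
      continuousOn_id fun t ht => (h0.trans_le ht.1).ne'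
  refine hcont.intervalIntegrable.congr fun t ht => ?_
  rw [uIoc_of_le hle] at ht
  simp only [hP.nu_affine n hn t ht.1.le ht.2]

lemma add_one_le_r_succ_of (hn : n₀ ≤ n) (hR'r : R' ≤ r n)
    (hint : IntervalIntegrable (fun t => ν t / t) volume 1 (r n))
    (hν : ∀ t ∈ Icc 1 (r n), (n₀ : ℝ) ≤ ν t) : r n + 1 ≤ r (n + 1) := by
  have h4 : 4 < r n := hP.four_lt.trans_le hR'r
  have hsq : r n ^ 2 ≤ r (n + 1) := hP.r_succ n hn ▸ sq_le_L (by linarith) hint fun t ht =>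
    (by exact_mod_cast hP.two_le : (2 : ℝ) ≤ n₀).trans (hν t ht)
  nlinarith

lemma le_r_and_intervalIntegrable_and_le_nu (hn : n₀ ≤ n) :
    R' ≤ r n ∧ IntervalIntegrable (fun t => ν t / t) volume 1 (r n) ∧
      ∀ t ∈ Icc 1 (r n), (n₀ : ℝ) ≤ ν t := by
  induction n, hn using Nat.le_induction with
  | base =>
    have hbase : EqOn (fun t => (n₀ : ℝ) / t) (fun t => ν t / t) (Icc 1 R') := fun t ht => by
      simp only [hP.nu_base t (by linarith [ht.1]) ht.2]
    rw [hP.r_base]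
    refine ⟨le_rfl, ?_, fun t ht => (hP.nu_base t (by linarith [ht.1]) ht.2).ge⟩
    have h1R' : (1 : ℝ) ≤ R' := by linarith [hP.four_lt]
    have hcont : ContinuousOn (fun t => (n₀ : ℝ) / t) (uIcc 1 R') :=
      continuousOn_const.div continuousOn_id fun t ht => by
        rw [uIcc_of_le h1R'] at ht; linarith [ht.1]
    exact hcont.intervalIntegrable.congr (uIoc_of_le h1R' ▸ hbase.mono Ioc_subset_Icc_self)
  | succ n hn ih =>
    obtain ⟨hR'r, hint, hν⟩ := ih
    have hle : r n ≤ r (n + 1) := by linarith [hP.add_one_le_r_succ_of hn hR'r hint hν]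
    have hint' := hP.intervalIntegrable_r_r_succ hn (by linarith [hP.four_lt]) hle
    refine ⟨hR'r.trans hle, hint.trans hint', fun t ht => ?_⟩
    rcases le_total t (r n) with htn | htn
    · exact hν t ⟨ht.1, htn⟩
    · exact (Nat.cast_le.2 hn).trans (hP.le_nu_of_mem_Icc hn ⟨htn, ht.2⟩)

lemma four_lt_r (hn : n₀ ≤ n) : 4 < r n :=
  hP.four_lt.trans_le (hP.le_r_and_intervalIntegrable_and_le_nu hn).1

lemma add_one_le_r_succ (hn : n₀ ≤ n) : r n + 1 ≤ r (n + 1) :=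
  let ⟨hR'r, hint, hν⟩ := hP.le_r_and_intervalIntegrable_and_le_nu hn
  hP.add_one_le_r_succ_of hn hR'r hint hν

lemma r_mono {m : ℕ} (hm : n₀ ≤ m) (hmn : m ≤ n) : r m ≤ r n := by
  induction n, hmn using Nat.le_induction with
  | base => rfl
  | succ n hmn ih => linarith [hP.add_one_le_r_succ (hm.trans hmn)]

lemma sub_le_r (hn : n₀ ≤ n) : (n : ℝ) - n₀ ≤ r n := by
  induction n, hn using Nat.le_induction with
  | base => linarith [hP.four_lt_r le_rfl]
  | succ n hn ih => push_cast; linarith [hP.add_one_le_r_succ hn]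

lemma tendsto_r : Tendsto r atTop atTop :=
  tendsto_atTop_mono' _ (eventually_atTop.2 ⟨n₀, fun _ hn => hP.sub_le_r hn⟩)
    (tendsto_atTop_add_const_right _ _ tendsto_natCast_atTop_atTop)

lemma not_exceptional {ε s : ℝ} (hε : ε ≤ 1) (hn : n₀ ≤ n) (hs : r n < s)
    (hs' : s < ε * r (n + 1)) : ¬ ∃ m : ℕ, n₀ < m ∧ ε * r m ≤ s ∧ s ≤ r m := by
  rintro ⟨m, hm, hεm, hsm⟩
  rcases le_or_gt m n with hmn | hnm
  · linarith [hP.r_mono hm.le hmn]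
  · have hrm : r (n + 1) ≤ r m := hP.r_mono (hn.trans n.le_succ) hnm
    have h4 := hP.four_lt_r hn
    have h4' := hP.four_lt_r (hn.trans n.le_succ)
    have hε0 : 0 < ε := by nlinarith
    linarith [mul_le_mul_of_nonneg_left hrm hε0.le]

lemma L_mul_div_pow_le (hn : n₀ ≤ n) {a b : ℝ} (ha : r n ≤ a) (hab : a ≤ b)
    (hb : b ≤ r (n + 1)) : L ν a * (b / a) ^ n ≤ L ν b := by
  have h4 := hP.four_lt_r hn
  have hint := (hP.le_r_and_intervalIntegrable_and_le_nu (Nat.le_succ_of_le hn)).2.1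
  refine DrasinSastry.L_mul_div_pow_le (by linarith) hab (hint.mono_set ?_) (hint.mono_set ?_)
    fun t ht => hP.le_nu_of_mem_Icc hn ⟨ha.trans ht.1, ht.2.trans hb⟩
  all_goals rw [uIcc_of_le (by linarith), uIcc_of_le (by linarith)]
  · exact Icc_subset_Icc_right (by linarith)
  · exact Icc_subset_Icc (by linarith) hb

lemma two_mul_r_succ_le_mul_L {c s : ℝ} (hn : n₀ ≤ n) (hc : 2 ≤ c * 2 ^ n) (hs : 2 * r n ≤ s)
    (hs' : s ≤ r (n + 1)) : 2 * r (n + 1) ≤ c * L ν s := by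
  have h4 := hP.four_lt_r hn
  have hgrowth := hP.L_mul_div_pow_le hn le_rfl (by linarith) hs'
  have h2 : (2 : ℝ) ^ n ≤ (s / r n) ^ n :=
    pow_le_pow_left₀ zero_le_two ((le_div_iff₀ (by linarith)).2 hs) n
  rw [← hP.r_succ n hn] at hgrowth
  have hc0 : 0 ≤ c := by nlinarith [(by positivity : (0 : ℝ) < 2 ^ n)]
  have h4' := hP.four_lt_r (Nat.le_succ_of_le hn)
  calc 2 * r (n + 1) ≤ c * 2 ^ n * r (n + 1) := by gcongr
    _ = c * (r (n + 1) * 2 ^ n) := by ring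
    _ ≤ c * L ν s := by gcongr; exact (by gcongr : _ ≤ r (n + 1) * (s / r n) ^ n).trans hgrowth

lemma mul_L_le_mul_r_succ_succ {C ε s : ℝ} (hn : n₀ ≤ n) (hC : 0 ≤ C) (hε : 0 < ε)
    (hε1 : ε ≤ 1) (hCε : C * ε ^ n ≤ ε) (hs : r n ≤ s) (hs' : s ≤ ε * r (n + 1)) :
    C * L ν s ≤ ε * r (n + 2) := by
  have h4 := hP.four_lt_r hn
  have h4' := hP.four_lt_r (Nat.le_succ_of_le hn)
  have h4'' := hP.four_lt_r (n := n + 2) (by omega)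
  have hL := (L_pos (ν := ν) s).le
  have hgrowth : L ν s * (r (n + 1) / s) ^ n ≤ r (n + 2) :=
    hP.r_succ (n + 1) (Nat.le_succ_of_le hn) ▸
      hP.L_mul_div_pow_le hn hs (by nlinarith) le_rfl
  have h2 : ε⁻¹ ^ n ≤ (r (n + 1) / s) ^ n := by
    gcongr
    rw [le_div_iff₀ (by linarith), inv_mul_le_iff₀ hε]
    exact hs'
  calc C * L ν s = C * ε ^ n * (L ν s * ε⁻¹ ^ n) := by
        rw [inv_pow]; field_simp
    _ ≤ C * ε ^ n * r (n + 2) := by gcongr; exact (by gcongr : _ ≤ _ * _ ^ n).trans hgrowth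
    _ ≤ ε * r (n + 2) := by gcongr

end IsParameters

end DrasinSastry

open DrasinSastry in
theorem drasinSastry_maps_rings_general (d : ℕ)
    (n₀ : ℕ) (hn₀ : 2 ≤ n₀) (R' : ℝ) (hR' : 4 < R')
    (ν : ℝ → ℝ) (r : ℕ → ℝ)
    (hν₀ : ∀ t : ℝ, 0 ≤ t → t ≤ R' → ν t = n₀)
    (hrn₀ : r n₀ = R')
    (hrec : ∀ n : ℕ, n₀ ≤ n → r (n + 1) = Real.exp (∫ t in (1 : ℝ)..(r n), ν t / t))
    (hνlin : ∀ n : ℕ, n₀ ≤ n → ∀ t : ℝ, r n ≤ t → t ≤ r (n + 1) →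
      ν t = (t - r n) / (r (n + 1) - r n) + n)
    (L : ℝ → ℝ) (hL : ∀ s : ℝ, L s = Real.exp (∫ t in (1 : ℝ)..s, ν t / t))
    (g : EuclideanSpace ℝ (Fin d) → EuclideanSpace ℝ (Fin d))
    (c C R₀ : ℝ) (hc : 0 < c) (hC : 0 < C)
    (ε : ℝ) (hε0 : 0 < ε) (hε1 : ε < 1)
    (hg : ∀ x : EuclideanSpace ℝ (Fin d), R₀ ≤ maxNorm x →
      (¬ ∃ m : ℕ, n₀ < m ∧ ε * r m ≤ maxNorm x ∧ maxNorm x ≤ r m) →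
      c * L (maxNorm x) < maxNorm (g x) ∧ maxNorm (g x) < C * L (maxNorm x)) :
    ∃ N₀ : ℕ, ∀ n : ℕ, N₀ ≤ n →
      ∀ x : EuclideanSpace ℝ (Fin d),
        2 * r n < maxNorm x → maxNorm x < ε * r (n + 1) →
        2 * r (n + 1) < maxNorm (g x) ∧ maxNorm (g x) < ε * r (n + 2) := by
  have hP : IsParameters n₀ R' ν r := ⟨hn₀, hR', hν₀, hrn₀, hrec, hνlin⟩
  obtain rfl : L = DrasinSastry.L ν := funext hL
  have hc2 : ∀ᶠ n : ℕ in atTop, 2 ≤ c * 2 ^ n :=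
    ((tendsto_pow_atTop_atTop_of_one_lt one_lt_two).const_mul_atTop hc).eventually_ge_atTop 2
  have hCε : ∀ᶠ n : ℕ in atTop, C * ε ^ n ≤ ε := by
    have := (tendsto_pow_atTop_nhds_zero_of_lt_one hε0.le hε1).const_mul C
    rw [mul_zero] at this
    exact this.eventually_le_const hε0
  obtain ⟨N₀, hN₀⟩ := eventually_atTop.1 <| (eventually_ge_atTop n₀).and <|
    (hP.tendsto_r.eventually_ge_atTop R₀).and (hc2.and hCε)
  refine ⟨N₀, fun n hn x hx hx' => ?_⟩
  obtain ⟨hn₀n, hR₀, hc2n, hCεn⟩ := hN₀ n hn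
  have h4 := hP.four_lt_r hn₀n
  have h4' := hP.four_lt_r (hn₀n.trans n.le_succ)
  obtain ⟨hlow, hup⟩ := hg x (by linarith) (hP.not_exceptional hε1.le hn₀n (by linarith) hx')
  exact ⟨(hP.two_mul_r_succ_le_mul_L hn₀n hc2n hx.le (by nlinarith)).trans_lt hlow,
    hup.trans_le (hP.mul_L_le_mul_r_succ_succ hn₀n hC.le hε0 hε1.le hCεn (by linarith) hx'.le)⟩

/-- Let `d ≥ 2` and consider the Drasin–Sastry parameter construction (given by the
data `n₀, R', ν, r, L` below). If `g : ℝ^d → ℝ^d` is any map such that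
`c·L(‖x‖_∞) < ‖g(x)‖_∞ < C·L(‖x‖_∞)` whenever `‖x‖_∞ ∈ [R₀,∞) \ E_ε`, where
`E_ε = ⋃_{m > n₀} [ε r_m, r_m]`, then there exists `N₀` such that for all `n ≥ N₀`,
`g` maps `A_n = {x : 2 r_n < ‖x‖_∞ < ε r_{n+1}}` into `A_{n+1}`. -/
theorem drasinSastry_maps_rings (d : ℕ) (hd : 2 ≤ d)
    (n₀ : ℕ) (hn₀ : 2 ≤ n₀) (R' : ℝ) (hR' : 4 < R')
    (ν : ℝ → ℝ) (r : ℕ → ℝ)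
    (hν₀ : ∀ t : ℝ, 0 ≤ t → t ≤ R' → ν t = n₀)
    (hrn₀ : r n₀ = R')
    (hrec : ∀ n : ℕ, n₀ ≤ n → r (n + 1) = Real.exp (∫ t in (1 : ℝ)..(r n), ν t / t))
    (hνlin : ∀ n : ℕ, n₀ ≤ n → ∀ t : ℝ, r n ≤ t → t ≤ r (n + 1) →
      ν t = (t - r n) / (r (n + 1) - r n) + n)
    (L : ℝ → ℝ) (hL : ∀ s : ℝ, L s = Real.exp (∫ t in (1 : ℝ)..s, ν t / t))
    (g : EuclideanSpace ℝ (Fin d) → EuclideanSpace ℝ (Fin d))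
    (c C R₀ : ℝ) (hc : 0 < c) (hC : 0 < C) (hR₀ : 0 < R₀)
    (ε : ℝ) (hε0 : 0 < ε) (hε1 : ε < 1)
    (hg : ∀ x : EuclideanSpace ℝ (Fin d), R₀ ≤ maxNorm x →
      (¬ ∃ m : ℕ, n₀ < m ∧ ε * r m ≤ maxNorm x ∧ maxNorm x ≤ r m) →
      c * L (maxNorm x) < maxNorm (g x) ∧ maxNorm (g x) < C * L (maxNorm x)) :
    ∃ N₀ : ℕ, ∀ n : ℕ, N₀ ≤ n →
      ∀ x : EuclideanSpace ℝ (Fin d),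
        2 * r n < maxNorm x → maxNorm x < ε * r (n + 1) →
        2 * r (n + 1) < maxNorm (g x) ∧ maxNorm (g x) < ε * r (n + 2) :=
  drasinSastry_maps_rings_general d n₀ hn₀ R' hR' ν r hν₀ hrn₀ hrec hνlin L hL g c C R₀ hc hC ε hε0
    hε1 hg
end
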